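/- arXiv:1206.6356 — 8 statements merged into one kernel-verified Lean document; each statement's English description precedes it below -/
import Mathlib

section
/- A nonzero signal x on a connected graph satisfies Δ_{g,u0}²(x) = 0 if and only if x is a scalar multiple of the impulse δ_{u0}; moreover in that case Δ_s²(x) = 1. Hence (1,0) is the unique point of the feasibility region on the horizontal axis. -/
/-!
If `x ≠ 0`, then `Δ_{g,u₀}²(x) = 0` forces `d(u₀, v) x(v) = 0` for every `v`, and since `d(u₀, v) = 0`
only at `v = u₀`, the signal is a multiple `c δ_{u₀}` with `c ≠ 0`. For such an impulse the Rayleigh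
quotient of any matrix `A` is the diagonal entry `A u₀ u₀`, which for the normalized Laplacian is `1`
because a simple graph has no loops.
-/

open Matrix BigOperators Finset

/-- The normalized Laplacian `L = I - D^{-1/2} A D^{-1/2}` of a simple graph. -/
noncomputable def normLap {V : Type*} [Fintype V] [DecidableEq V]
    (G : SimpleGraph V) [DecidableRel G.Adj] : Matrix V V ℝ :=
  fun i j => (if i = j then (1 : ℝ) else 0) -
    (if G.Adj i j then 1 / (Real.sqrt (G.degree i) * Real.sqrt (G.degree j)) else 0)

section
variable {V : Type*}

lemma sum_sq_pos_of_ne_zero [Fintype V] {x : V → ℝ} (hx : x ≠ 0) : 0 < ∑ v, x v ^ 2 := by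
  obtain ⟨v, hv⟩ := Function.ne_iff.mp hx
  exact Finset.sum_pos' (fun _ _ => sq_nonneg _) ⟨v, mem_univ v, sq_pos_of_ne_zero hv⟩

lemma sum_sq_mul_sq_eq_zero_iff [Fintype V] {w x : V → ℝ} {u : V} (hw : ∀ v, w v = 0 ↔ v = u) :
    ∑ v, w v ^ 2 * x v ^ 2 = 0 ↔ ∀ v ≠ u, x v = 0 := by
  rw [Finset.sum_eq_zero_iff_of_nonneg fun _ _ => by positivity]
  simp only [mem_univ, true_implies, mul_eq_zero, pow_eq_zero_iff two_ne_zero, hw]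
  exact forall_congr' fun v => or_iff_not_imp_left

lemma exists_eq_smul_single_one_iff [DecidableEq V] {x : V → ℝ} {u : V} :
    (∃ c : ℝ, x = c • Pi.single u 1) ↔ ∀ v ≠ u, x v = 0 := by
  constructor
  · rintro ⟨c, rfl⟩ v hv
    simp [hv]
  · intro h
    refine ⟨x u, funext fun v => ?_⟩
    by_cases hv : v = u
    · simp [hv]
    · simp [hv, h v hv]

lemma dotProduct_mulVec_div_sum_sq_single [Fintype V] [DecidableEq V] (A : Matrix V V ℝ) (u : V)
    {c : ℝ} (hc : c ≠ 0) :
    (Pi.single u c ⬝ᵥ (A *ᵥ Pi.single u c)) / ∑ v, (Pi.single u c : V → ℝ) v ^ 2 = A u u := by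
  have hsum : ∑ v, (Pi.single u c : V → ℝ) v ^ 2 = c ^ 2 := by simp [Pi.single_apply]
  rw [hsum, single_dotProduct, mulVec_single]
  field_simp
  simp [col]
  ring

lemma normLap_apply_self [Fintype V] [DecidableEq V] (G : SimpleGraph V) [DecidableRel G.Adj]
    (v : V) : normLap G v v = 1 := by
  simp [normLap]

end

theorem stmt4_general {V : Type*} [Fintype V] [DecidableEq V]
    (G : SimpleGraph V) [DecidableRel G.Adj]
    (d : V → V → ℝ)
    (hd_eq_zero : ∀ u v, d u v = 0 ↔ u = v)
    (u0 : V) :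
    let Δs : (V → ℝ) → ℝ := fun x => (x ⬝ᵥ (normLap G *ᵥ x)) / (∑ v : V, (x v) ^ 2)
    let Δg : (V → ℝ) → ℝ := fun x =>
      (∑ v : V, (d u0 v) ^ 2 * (x v) ^ 2) / (∑ v : V, (x v) ^ 2)
    let δ : V → ℝ := fun v => if v = u0 then 1 else 0
    (∀ x : V → ℝ, x ≠ 0 →
      ((Δg x = 0 ↔ ∃ c : ℝ, x = c • δ) ∧ (Δg x = 0 → Δs x = 1))) ∧
    (∀ p : ℝ × ℝ, (∃ x : V → ℝ, x ≠ 0 ∧ p.1 = Δs x ∧ p.2 = Δg x) → p.2 = 0 →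
      p = (1, 0)) := by
  intro Δs Δg δ
  have hδ : δ = Pi.single u0 1 := funext fun v => (Pi.single_apply u0 1 v).symm
  have hΔg : ∀ x ≠ 0, Δg x = 0 ↔ ∃ c : ℝ, x = c • δ := fun x hx => by
    rw [hδ, exists_eq_smul_single_one_iff, ← sum_sq_mul_sq_eq_zero_iff fun v =>
      (hd_eq_zero u0 v).trans eq_comm]
    exact div_eq_zero_iff.trans (or_iff_left (sum_sq_pos_of_ne_zero hx).ne')
  have key : ∀ x ≠ 0, (Δg x = 0 ↔ ∃ c : ℝ, x = c • δ) ∧ (Δg x = 0 → Δs x = 1) := by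
    refine fun x hx => ⟨hΔg x hx, fun h => ?_⟩
    obtain ⟨c, rfl⟩ := (hΔg x hx).mp h
    have hc : c ≠ 0 := by rintro rfl; exact hx (zero_smul ℝ δ)
    rw [hδ, ← Pi.single_smul', smul_eq_mul, mul_one]
    exact (dotProduct_mulVec_div_sum_sq_single _ u0 hc).trans (normLap_apply_self G u0)
  refine ⟨key, ?_⟩
  rintro ⟨a, b⟩ ⟨x, hx, rfl, rfl⟩ hb
  exact Prod.ext ((key x hx).2 hb) hb

/-- A nonzero signal `x` on a connected graph (with at least 2 vertices) has zero graph
spread iff it is a scalar multiple of the impulse `δ_{u0}`; in that case its spectral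
spread equals `1`. Hence `(1,0)` is the unique point of the feasibility region on the
horizontal axis. -/
theorem stmt4 {V : Type*} [Fintype V] [DecidableEq V]
    (hcard : 2 ≤ Fintype.card V)
    (G : SimpleGraph V) [DecidableRel G.Adj] (hconn : G.Connected)
    (d : V → V → ℝ)
    (hd_nonneg : ∀ u v, 0 ≤ d u v)
    (hd_eq_zero : ∀ u v, d u v = 0 ↔ u = v)
    (hd_symm : ∀ u v, d u v = d v u)
    (u0 : V) :
    let Δs : (V → ℝ) → ℝ := fun x => (x ⬝ᵥ (normLap G *ᵥ x)) / (∑ v : V, (x v) ^ 2)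
    let Δg : (V → ℝ) → ℝ := fun x =>
      (∑ v : V, (d u0 v) ^ 2 * (x v) ^ 2) / (∑ v : V, (x v) ^ 2)
    let δ : V → ℝ := fun v => if v = u0 then 1 else 0
    (∀ x : V → ℝ, x ≠ 0 →
      ((Δg x = 0 ↔ ∃ c : ℝ, x = c • δ) ∧ (Δg x = 0 → Δs x = 1))) ∧
    (∀ p : ℝ × ℝ, (∃ x : V → ℝ, x ≠ 0 ∧ p.1 = Δs x ∧ p.2 = Δg x) → p.2 = 0 →
      p = (1, 0)) :=
  stmt4_general G d hd_eq_zero u0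
end

section
/- (Convexity of the feasibility region) Let N ≥ 3 and suppose x1, x2 ∈ ℝ^N are unit vectors with x_i^T L x_i = s_i and x_i^T P² x_i = g_i for symmetric positive semidefinite matrices L and P². Then for every β ∈ [0,1] there exists a unit vector x with x^T L x = β s1 + (1-β) s2 and x^T P² x = β g1 + (1-β) g2. -/
/-!
The image of the unit sphere `{S = 1}` of a positive definite form under a pair of quadratic forms
`(Q₁, Q₂)` is convex (Brickman). Given image points `p₁ ≠ p₂` and `m = p₂ - p₁`, the form
`A = m₂ Q₁ - m₁ Q₂ - c S` vanishes on the sphere exactly at the vectors whose image lies on the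
line `p₁p₂`. Two isotropic vectors `x, y` of a quadratic form can be joined, up to rescaling `y`,
inside its isotropic cone: along a segment if they are orthogonal, and otherwise through a vector
`w` orthogonal to both (this is where dimension at least three is needed), along two segments if
`w` is isotropic and along a conic arc in `span {x, w, y}` if not. The intermediate value theorem
for `(m₁ Q₁ + m₂ Q₂) / S` along such a set reaches every point of the segment `[p₁, p₂]`, and
rescaling onto the sphere gives the required vector.
-/

open Module

lemma exists_ne_zero_apply_eq_zero_of_two_lt_finrank {K E : Type*} [Field K] [AddCommGroup E]
    [Module K E] (hE : 2 < finrank K E) (f g : E →ₗ[K] K) :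
    ∃ w : E, w ≠ 0 ∧ f w = 0 ∧ g w = 0 := by
  have : FiniteDimensional K E := Module.finite_of_finrank_pos (by omega)
  have hker : LinearMap.ker (f.prod g) ≠ ⊥ := LinearMap.ker_ne_bot_of_finrank_lt (by simpa)
  obtain ⟨w, hw, hw0⟩ := Submodule.exists_mem_ne_zero_of_ne_bot hker
  simp only [LinearMap.mem_ker, LinearMap.prod_apply, Function.prod, Prod.mk_eq_zero] at hw
  exact ⟨w, hw0, hw⟩

lemma exists_zero_notMem_segment_smul {E : Type*} [AddCommGroup E] [Module ℝ E] {x y : E}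
    (hx : x ≠ 0) (hy : y ≠ 0) : ∃ r : ℝ, r ≠ 0 ∧ (0 : E) ∉ segment ℝ x (r • y) := by
  by_contra! h
  have h₁ := h 1 one_ne_zero
  have h₂ := h (-1) (by norm_num)
  simp only [mem_segment_iff_sameRay, zero_sub, sub_zero, one_smul, neg_one_smul] at h₁ h₂
  exact hy (eq_zero_of_sameRay_self_neg <| h₁.symm.trans h₂ fun h => absurd (neg_eq_zero.1 h) hx)

lemma Prod.eq_of_dot_eq_of_cross_eq {m p q : ℝ × ℝ} (hm : m ≠ 0)
    (hdot : m.1 * p.1 + m.2 * p.2 = m.1 * q.1 + m.2 * q.2)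
    (hcross : m.2 * p.1 - m.1 * p.2 = m.2 * q.1 - m.1 * q.2) : p = q := by
  have hm' : m.1 ^ 2 + m.2 ^ 2 ≠ 0 := by
    contrapose! hm
    ext <;> simp only [Prod.fst_zero, Prod.snd_zero] <;> nlinarith [sq_nonneg m.1, sq_nonneg m.2]
  ext <;> apply mul_left_cancel₀ hm'
  · linear_combination m.1 * hdot + m.2 * hcross
  · linear_combination m.2 * hdot - m.1 * hcross

namespace QuadraticMap

variable {E : Type*} [AddCommGroup E] [Module ℝ E]

lemma map_smul_add_smul (Q : QuadraticForm ℝ E) (a b : ℝ) (x y : E) :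
    Q (a • x + b • y) = a ^ 2 * Q x + b ^ 2 * Q y + a * b * polar Q x y := by
  rw [QuadraticMap.map_add (⇑Q), QuadraticMap.map_smul, QuadraticMap.map_smul, polar_smul_left,
    polar_smul_right]
  simp only [smul_eq_mul]
  ring

lemma exists_map_smul_eq_one (S : QuadraticForm ℝ E) {v : E} (hv : 0 < S v) :
    ∃ c : ℝ, S (c • v) = 1 ∧ ∀ Q : QuadraticForm ℝ E, Q (c • v) = Q v / S v := by
  have hc : ∀ Q : QuadraticForm ℝ E, Q ((√(S v))⁻¹ • v) = Q v / S v := fun Q => by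
    rw [QuadraticMap.map_smul, smul_eq_mul, ← mul_inv, Real.mul_self_sqrt hv.le, inv_mul_eq_div]
  exact ⟨_, (hc S).trans (div_self hv.ne'), hc⟩

lemma div_map_smul (Q S : QuadraticForm ℝ E) {r : ℝ} (hr : r ≠ 0) (v : E) :
    Q (r • v) / S (r • v) = Q v / S v := by
  simp only [QuadraticMap.map_smul, smul_eq_mul]
  exact mul_div_mul_left _ _ (mul_self_ne_zero.2 hr)

end QuadraticMap

section IsotropicVectors

open QuadraticMap

variable {E : Type*} [AddCommGroup E] [Module ℝ E] {Q : QuadraticForm ℝ E}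

variable (Q) in
def isotropicVectors : Set E := {v | v ≠ 0 ∧ Q v = 0}

lemma segment_subset_isotropicVectors {x y : E} (hx : Q x = 0) (hy : Q y = 0)
    (hxy : polar Q x y = 0) (h0 : (0 : E) ∉ segment ℝ x y) :
    segment ℝ x y ⊆ isotropicVectors Q := by
  intro z hz
  obtain ⟨a, b, -, -, -, rfl⟩ := id hz
  exact ⟨fun h => h0 (h ▸ hz), by rw [map_smul_add_smul, hx, hy, hxy]; ring⟩

lemma exists_segment_smul_subset_isotropicVectors {x y : E} (hx : x ∈ isotropicVectors Q)
    (hy : y ∈ isotropicVectors Q) (hxy : polar Q x y = 0) :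
    ∃ r : ℝ, r ≠ 0 ∧ segment ℝ x (r • y) ⊆ isotropicVectors Q := by
  obtain ⟨r, hr, h0⟩ := exists_zero_notMem_segment_smul hx.1 hy.1
  refine ⟨r, hr, segment_subset_isotropicVectors hx.2 ?_ ?_ h0⟩
  · rw [QuadraticMap.map_smul, hy.2, smul_zero]
  · rw [polar_smul_right, hxy, smul_zero]

/-- In the coordinates `α x + γ w + β y` the form is `α β polar Q x y + γ² Q w`, which vanishes
identically along `α = (1 - t)², γ = t (1 - t), β = κ t²` for the right `κ`. -/
lemma conicArc_mem_isotropicVectors {x y w : E} (hx : Q x = 0) (hy : y ∈ isotropicVectors Q)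
    (hxy : polar Q x y ≠ 0) (hxw : polar Q x w = 0) (hyw : polar Q y w = 0) (hw : Q w ≠ 0)
    (t : ℝ) :
    ((1 - t) ^ 2) • x + (t * (1 - t)) • w + (-Q w / polar Q x y * t ^ 2) • y ∈
      isotropicVectors Q := by
  refine ⟨fun h0 => ?_, ?_⟩
  · have hpolar : polar Q y (((1 - t) ^ 2) • x + (t * (1 - t)) • w +
        (-Q w / polar Q x y * t ^ 2) • y) = (1 - t) ^ 2 * polar Q x y := by
      simp [polar_add_right, polar_smul_right, polar_self, hy.2, hyw, polar_comm Q y x]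
    rw [h0, polar_zero_right, eq_comm, mul_eq_zero, pow_eq_zero_iff two_ne_zero,
      sub_eq_zero] at hpolar
    obtain rfl := hpolar.resolve_right hxy
    simp [hw, hxy, hy.1] at h0
  · rw [QuadraticMap.map_add (⇑Q), map_smul_add_smul, QuadraticMap.map_smul, polar_smul_right,
      polar_add_left, polar_smul_left, polar_smul_left, polar_comm Q w y, hyw, hxw, hx, hy.2]
    simp only [smul_eq_mul]
    field_simp
    ring

variable [TopologicalSpace E] [IsTopologicalAddGroup E] [ContinuousSMul ℝ E]

theorem exists_isPreconnected_isotropicVectors (hE : 3 ≤ finrank ℝ E) {x y : E}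
    (hx : x ∈ isotropicVectors Q) (hy : y ∈ isotropicVectors Q) :
    ∃ T ⊆ isotropicVectors Q, IsPreconnected T ∧ x ∈ T ∧ ∃ r : ℝ, r ≠ 0 ∧ r • y ∈ T := by
  by_cases hxy : polar Q x y = 0
  · obtain ⟨r, hr, hT⟩ := exists_segment_smul_subset_isotropicVectors hx hy hxy
    exact ⟨_, hT, (convex_segment _ _).isPreconnected, left_mem_segment _ _ _, r, hr,
      right_mem_segment _ _ _⟩
  obtain ⟨w, hw0, hxw, hyw⟩ :=
    exists_ne_zero_apply_eq_zero_of_two_lt_finrank hE (polarBilin Q x) (polarBilin Q y)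
  simp only [polarBilin_apply_apply] at hxw hyw
  by_cases hw : Q w = 0
  · obtain ⟨r, hr, hT⟩ := exists_segment_smul_subset_isotropicVectors hx ⟨hw0, hw⟩ hxw
    have hrw : r • w ∈ isotropicVectors Q :=
      ⟨smul_ne_zero hr hw0, by rw [QuadraticMap.map_smul, hw, smul_zero]⟩
    obtain ⟨s, hs, hT'⟩ := exists_segment_smul_subset_isotropicVectors hrw hy
      (by rw [polar_smul_left, polar_comm, hyw, smul_zero])
    refine ⟨_, Set.union_subset hT hT', ?_, Or.inl (left_mem_segment _ _ _), s, hs,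
      Or.inr (right_mem_segment _ _ _)⟩
    exact (convex_segment _ _).isPreconnected.union (r • w) (right_mem_segment _ _ _)
      (left_mem_segment _ _ _) (convex_segment _ _).isPreconnected
  · refine ⟨_, Set.range_subset_iff.2 (conicArc_mem_isotropicVectors hx.2 hy hxy hxw hyw hw),
      isPreconnected_range (by fun_prop), ⟨0, by simp⟩, -Q w / polar Q x y,
      div_ne_zero (neg_ne_zero.2 hw) hxy, ⟨1, by simp⟩⟩

end IsotropicVectors

section Brickman

variable {E : Type*} [AddCommGroup E] [Module ℝ E]

lemma mem_image_of_dot_eq_of_cross_eq {Q₁ Q₂ S : QuadraticForm ℝ E} {m p : ℝ × ℝ} (hm : m ≠ 0)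
    {v : E} (hv : 0 < S v) (hdot : (m.1 • Q₁ + m.2 • Q₂) v / S v = m.1 * p.1 + m.2 * p.2)
    (hcross : m.2 * Q₁ v - m.1 * Q₂ v = (m.2 * p.1 - m.1 * p.2) * S v) :
    p ∈ (fun x => (Q₁ x, Q₂ x)) '' {x | S x = 1} := by
  obtain ⟨c, hc1, hc⟩ := S.exists_map_smul_eq_one hv
  refine ⟨c • v, hc1, Prod.eq_of_dot_eq_of_cross_eq hm ?_ ?_⟩
  · simpa only [hc, add_apply, smul_apply, smul_eq_mul, add_div, mul_div_assoc] using hdot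
  · simp only [hc]
    field_simp
    linear_combination hcross

variable [TopologicalSpace E] [IsTopologicalAddGroup E] [ContinuousSMul ℝ E]

/-- Brickman's theorem. -/
theorem convex_image_prod_of_posDef (hE : 3 ≤ finrank ℝ E) {Q₁ Q₂ S : QuadraticForm ℝ E}
    (hQ₁ : Continuous Q₁) (hQ₂ : Continuous Q₂) (hS : Continuous S) (hSpos : S.PosDef) :
    Convex ℝ ((fun x => (Q₁ x, Q₂ x)) '' {x | S x = 1}) := by
  rintro _ ⟨x₁, hx₁ : S x₁ = 1, rfl⟩ _ ⟨x₂, hx₂ : S x₂ = 1, rfl⟩ a b ha hb hab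
  dsimp only
  set p₁ := (Q₁ x₁, Q₂ x₁)
  set p₂ := (Q₁ x₂, Q₂ x₂)
  by_cases hp : p₁ = p₂
  · rw [← hp, Convex.combo_self hab]
    exact ⟨x₁, hx₁, rfl⟩
  set m := p₂ - p₁
  set A := m.2 • Q₁ - m.1 • Q₂ - (m.2 * p₁.1 - m.1 * p₁.2) • S
  have hA : ∀ x, A x = m.2 * Q₁ x - m.1 * Q₂ x - (m.2 * p₁.1 - m.1 * p₁.2) * S x := by
    simp [A]
  have hne : ∀ x, S x = 1 → x ≠ 0 := fun x hx h => by subst h; simp at hx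
  obtain ⟨T, hTiso, hT, hx₁T, r, hr, hx₂T⟩ := exists_isPreconnected_isotropicVectors hE
    (Q := A) ⟨hne x₁ hx₁, by rw [hA, hx₁]; ring⟩
    ⟨hne x₂ hx₂, by rw [hA, hx₂]; simp only [m, p₁, p₂, Prod.fst_sub, Prod.snd_sub]; ring⟩
  set f : E → ℝ := fun v => (m.1 • Q₁ + m.2 • Q₂) v / S v
  have hf : ContinuousOn f T :=
    ((hQ₁.const_smul _).add (hQ₂.const_smul _)).continuousOn.div hS.continuousOn
      fun v hv => (hSpos v (hTiso hv).1).ne'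
  have hmem : m.1 * (a • p₁ + b • p₂).1 + m.2 * (a • p₁ + b • p₂).2 ∈ f '' T := by
    refine (hT.image f hf).ordConnected.uIcc_subset ⟨x₁, hx₁T, rfl⟩ ⟨_, hx₂T, rfl⟩ ?_
    rw [← segment_eq_uIcc, show f (r • x₂) = f x₂ from QuadraticMap.div_map_smul _ _ hr _]
    refine ⟨a, b, ha, hb, hab, ?_⟩
    simp only [f, p₁, p₂, add_apply, smul_apply, smul_eq_mul, hx₁, hx₂,
      div_one, Prod.smul_mk, Prod.mk_add_mk]
    ring
  obtain ⟨v, hvT, hfv⟩ := hmem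
  have hAv := (hTiso hvT).2
  rw [hA] at hAv
  refine mem_image_of_dot_eq_of_cross_eq (sub_ne_zero.2 (Ne.symm hp)) (hSpos v (hTiso hvT).1)
    hfv ?_
  simp only [m, p₁, p₂, Prod.fst_sub, Prod.snd_sub, Prod.fst_add, Prod.snd_add, Prod.smul_fst,
    Prod.smul_snd, smul_eq_mul] at hAv ⊢
  linear_combination hAv - S v * ((Q₂ x₂ - Q₂ x₁) * Q₁ x₁ - (Q₁ x₂ - Q₁ x₁) * Q₂ x₁) * hab

end Brickman

open Matrix

lemma Matrix.toQuadraticForm'_apply {n : Type*} [Fintype n] [DecidableEq n]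
    (M : Matrix n n ℝ) (x : n → ℝ) : M.toQuadraticForm' x = x ⬝ᵥ (M *ᵥ x) := by
  simp [Matrix.toQuadraticForm', toLinearMap₂'_apply']

lemma Matrix.continuous_toQuadraticForm' {n : Type*} [Fintype n] [DecidableEq n]
    (M : Matrix n n ℝ) : Continuous M.toQuadraticForm' := by
  simp only [funext M.toQuadraticForm'_apply]
  fun_prop

theorem stmt6_general {N : ℕ} (hN : 3 ≤ N)
    (L P2 : Matrix (Fin N) (Fin N) ℝ)
    (x1 x2 : Fin N → ℝ)
    (hx1 : ∑ i, (x1 i) ^ 2 = 1) (hx2 : ∑ i, (x2 i) ^ 2 = 1)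
    (s1 s2 g1 g2 : ℝ)
    (hs1 : x1 ⬝ᵥ (L *ᵥ x1) = s1) (hs2 : x2 ⬝ᵥ (L *ᵥ x2) = s2)
    (hg1 : x1 ⬝ᵥ (P2 *ᵥ x1) = g1) (hg2 : x2 ⬝ᵥ (P2 *ᵥ x2) = g2)
    (β : ℝ) (hβ : β ∈ Set.Icc (0 : ℝ) 1) :
    ∃ x : Fin N → ℝ, ∑ i, (x i) ^ 2 = 1 ∧
      x ⬝ᵥ (L *ᵥ x) = β * s1 + (1 - β) * s2 ∧
      x ⬝ᵥ (P2 *ᵥ x) = β * g1 + (1 - β) * g2 := by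
  have hsq : ∀ x : Fin N → ℝ, (1 : Matrix (Fin N) (Fin N) ℝ).toQuadraticForm' x = ∑ i, x i ^ 2 :=
    fun x => by simp [Matrix.toQuadraticForm'_apply, dotProduct, sq]
  have hconv := convex_image_prod_of_posDef (by simpa using hN) L.continuous_toQuadraticForm'
    P2.continuous_toQuadraticForm' (1 : Matrix (Fin N) (Fin N) ℝ).continuous_toQuadraticForm'
    PosDef.one.toQuadraticForm'
  obtain ⟨x, hx, hxp⟩ := hconv ⟨x1, (hsq x1).trans hx1, rfl⟩ ⟨x2, (hsq x2).trans hx2, rfl⟩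
    hβ.1 (sub_nonneg.2 hβ.2) (add_sub_cancel β 1)
  simp only [Matrix.toQuadraticForm'_apply, Prod.ext_iff] at hxp
  refine ⟨x, (hsq x).symm.trans hx, ?_, ?_⟩ <;> simp [hxp, hs1, hs2, hg1, hg2]

/-- Convexity of the feasibility region: if `N ≥ 3` and two unit vectors achieve
spread pairs `(s₁,g₁)` and `(s₂,g₂)` with respect to positive semidefinite matrices
`L` and `P²`, then every convex combination `(βs₁+(1-β)s₂, βg₁+(1-β)g₂)` is achieved
by some unit vector. -/
theorem stmt6 {N : ℕ} (hN : 3 ≤ N)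
    (L P2 : Matrix (Fin N) (Fin N) ℝ)
    (hL : L.PosSemidef) (hP2 : P2.PosSemidef)
    (x1 x2 : Fin N → ℝ)
    (hx1 : ∑ i, (x1 i) ^ 2 = 1) (hx2 : ∑ i, (x2 i) ^ 2 = 1)
    (s1 s2 g1 g2 : ℝ)
    (hs1 : x1 ⬝ᵥ (L *ᵥ x1) = s1) (hs2 : x2 ⬝ᵥ (L *ᵥ x2) = s2)
    (hg1 : x1 ⬝ᵥ (P2 *ᵥ x1) = g1) (hg2 : x2 ⬝ᵥ (P2 *ᵥ x2) = g2)
    (β : ℝ) (hβ : β ∈ Set.Icc (0 : ℝ) 1) :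
    ∃ x : Fin N → ℝ, ∑ i, (x i) ^ 2 = 1 ∧
      x ⬝ᵥ (L *ᵥ x) = β * s1 + (1 - β) * s2 ∧
      x ⬝ᵥ (P2 *ᵥ x) = β * g1 + (1 - β) * g2 :=
  stmt6_general hN L P2 x1 x2 hx1 hx2 s1 s2 g1 g2 hs1 hs2 hg1 hg2 β hβ
end

section
/- The functions h₊(α) = max{v^T L v : v ∈ S(α), ‖v‖=1} and h₋(α) = min{v^T L v : v ∈ S(α), ‖v‖=1}, where S(α) is the eigenspace of M(α) = P² - αL for its smallest eigenvalue, are monotonically nondecreasing: α1 < α2 implies h₊(α1) ≤ h₊(α2) and h₋(α1) ≤ h₋(α2). -/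
open Matrix BigOperators Finset

/-!
For a unit eigenvector `v` of `M(β)` for `q(β)`, the quadratic form of `M(γ) = M(β) - (γ - β) L`
at `v` equals `q(β) - (γ - β) vᵀLv`, and it is at least `q(γ)`. Hence every `r ∈ R(β)` satisfies
`q(γ) ≤ q(β) - (γ - β) r`: the lines through `(β, q(β))` of slope `-r` support the concave
function `q`. Combining this at `β` and at `γ` gives `r ≤ (q(β) - q(γ)) / (γ - β) ≤ s` for
`r ∈ R(β)`, `s ∈ R(γ)`, `β < γ`, and such an elementwise ordering of nonempty sets forces both
`sSup` and `sInf` to be monotone. The sets are nonempty because a minimiser of the Rayleigh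
quotient of a symmetric matrix is an eigenvector.
-/

section SupInf

variable {ι α : Type*} [Preorder ι] [ConditionallyCompleteLattice α] {R : ι → Set α}

theorem csSup_le_csSup_of_forall_le [NoMaxOrder ι] (hne : ∀ i, (R i).Nonempty)
    (hR : ∀ i j, i < j → ∀ r ∈ R i, ∀ s ∈ R j, r ≤ s) {i j : ι} (hij : i < j) :
    sSup (R i) ≤ sSup (R j) := by
  obtain ⟨k, hjk⟩ := exists_gt j
  obtain ⟨s, hs⟩ := hne j
  have hbdd : BddAbove (R j) := ⟨_, fun r hr => hR j k hjk r hr _ (hne k).some_mem⟩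
  exact (csSup_le (hne i) fun r hr => hR i j hij r hr s hs).trans (le_csSup hbdd hs)

theorem csInf_le_csInf_of_forall_le [NoMinOrder ι] (hne : ∀ i, (R i).Nonempty)
    (hR : ∀ i j, i < j → ∀ r ∈ R i, ∀ s ∈ R j, r ≤ s) {i j : ι} (hij : i < j) :
    sInf (R i) ≤ sInf (R j) := by
  obtain ⟨k, hki⟩ := exists_lt i
  obtain ⟨r, hr⟩ := hne i
  have hbdd : BddBelow (R i) := ⟨_, fun s hs => hR k i hki _ (hne k).some_mem s hs⟩
  exact (csInf_le hbdd hr).trans (le_csInf (hne j) fun s hs => hR i j hij r hr s hs)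

end SupInf

namespace Matrix

variable {n : Type*} [Fintype n]

theorem dotProduct_self_eq_sum_sq (v : n → ℝ) : v ⬝ᵥ v = ∑ i, v i ^ 2 := by
  simp only [dotProduct, sq]

theorem mul_dotProduct_self_le_of_forall_unit {M : Matrix n n ℝ} {q : ℝ}
    (hq : ∀ v : n → ℝ, ∑ i, v i ^ 2 = 1 → q ≤ v ⬝ᵥ (M *ᵥ v)) (x : n → ℝ) :
    q * (x ⬝ᵥ x) ≤ x ⬝ᵥ (M *ᵥ x) := by
  rcases eq_or_ne x 0 with rfl | hx
  · simp
  have hpos : 0 < x ⬝ᵥ x := by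
    simpa [dotProduct_self_eq_sum_sq] using
      (dotProduct_self_star_pos_iff (v := x)).2 hx
  set c := (Real.sqrt (x ⬝ᵥ x))⁻¹
  have hc : c ^ 2 * (x ⬝ᵥ x) = 1 := by
    rw [inv_pow, Real.sq_sqrt hpos.le, inv_mul_cancel₀ hpos.ne']
  have h := hq (c • x) (by
    rw [← dotProduct_self_eq_sum_sq, smul_dotProduct, dotProduct_smul, smul_smul, smul_eq_mul,
      ← sq, hc])
  rw [mulVec_smul, smul_dotProduct, dotProduct_smul, smul_smul, smul_eq_mul, ← sq] at h
  have : c ^ 2 * (q * (x ⬝ᵥ x)) ≤ c ^ 2 * (x ⬝ᵥ (M *ᵥ x)) := by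
    rw [mul_left_comm, hc]; linarith
  exact le_of_mul_le_mul_left this (by positivity)

theorem exists_mulVec_eq_smul_of_isLeast {M : Matrix n n ℝ} (hM : M.IsHermitian) {q : ℝ}
    (hq : IsLeast {r | ∃ v : n → ℝ, ∑ i, v i ^ 2 = 1 ∧ r = v ⬝ᵥ (M *ᵥ v)} q) :
    ∃ v : n → ℝ, ∑ i, v i ^ 2 = 1 ∧ M *ᵥ v = q • v := by
  classical
  obtain ⟨w, hw, hqw⟩ := hq.1
  have hsub : ∀ x : n → ℝ, (M - q • 1) *ᵥ x = M *ᵥ x - q • x := fun x => by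
    rw [sub_mulVec, smul_mulVec, one_mulVec]
  -- `q` is the least value of the quadratic form on the unit sphere, so `M - q • 1 ≥ 0`, and
  -- a minimiser `w` is a null vector of this positive semidefinite form.
  have hpsd : (M - q • 1).PosSemidef := by
    refine .of_dotProduct_mulVec_nonneg (hM.sub (isHermitian_one.smul (.all q))) fun x => ?_
    have := mul_dotProduct_self_le_of_forall_unit (fun v hv => hq.2 ⟨v, hv, rfl⟩) x
    rw [star_trivial, hsub, dotProduct_sub, dotProduct_smul, smul_eq_mul]
    linarith
  have hnull : star w ⬝ᵥ ((M - q • 1) *ᵥ w) = 0 := by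
    rw [star_trivial, hsub, dotProduct_sub, dotProduct_smul, smul_eq_mul, ← hqw,
      dotProduct_self_eq_sum_sq, hw, mul_one, sub_self]
  exact ⟨w, hw, sub_eq_zero.1 <| hsub w ▸ (hpsd.dotProduct_mulVec_zero_iff w).1 hnull⟩

theorem dotProduct_sub_smul_mulVec_of_mulVec_eq_smul {R : Type*} [CommRing R]
    {A L : Matrix n n R} {β c : R} {v : n → R} (hv : v ⬝ᵥ v = 1)
    (hev : (A - β • L) *ᵥ v = c • v) (δ : R) :
    v ⬝ᵥ ((A - δ • L) *ᵥ v) = c - (δ - β) * (v ⬝ᵥ (L *ᵥ v)) := by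
  have hA : A - δ • L = (A - β • L) - (δ - β) • L := by rw [sub_smul]; abel
  rw [hA, sub_mulVec, hev, smul_mulVec, dotProduct_sub, dotProduct_smul, dotProduct_smul,
    smul_eq_mul, smul_eq_mul, hv, mul_one]

end Matrix

/-- The functions `h₊(α) = max{vᵀLv : v ∈ S(α), ‖v‖=1}` and
`h₋(α) = min{vᵀLv : v ∈ S(α), ‖v‖=1}`, where `S(α)` is the eigenspace of
`M(α) = P² - αL` for its smallest eigenvalue `q(α)`, are monotonically
nondecreasing in `α`. -/
theorem stmt9 {N : ℕ} (P2 L : Matrix (Fin N) (Fin N) ℝ)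
    (hP2 : P2.IsHermitian) (hL : L.IsHermitian)
    (q : ℝ → ℝ)
    (hq : ∀ α : ℝ, IsLeast
      {r : ℝ | ∃ v : Fin N → ℝ, (∑ i, (v i) ^ 2 = 1) ∧
        r = v ⬝ᵥ ((P2 - α • L) *ᵥ v)} (q α))
    (R : ℝ → Set ℝ)
    (hR : ∀ α : ℝ, R α = {r : ℝ | ∃ v : Fin N → ℝ, (∑ i, (v i) ^ 2 = 1) ∧
      (P2 - α • L) *ᵥ v = q α • v ∧ r = v ⬝ᵥ (L *ᵥ v)})
    (α1 α2 : ℝ) (h12 : α1 < α2) :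
    sSup (R α1) ≤ sSup (R α2) ∧ sInf (R α1) ≤ sInf (R α2) := by
  have hsupport : ∀ β γ, ∀ r ∈ R β, q γ ≤ q β - (γ - β) * r := by
    intro β γ r hr
    rw [hR] at hr
    obtain ⟨v, hv, hev, rfl⟩ := hr
    rw [← dotProduct_sub_smul_mulVec_of_mulVec_eq_smul
      ((dotProduct_self_eq_sum_sq v).trans hv) hev γ]
    exact (hq γ).2 ⟨v, hv, rfl⟩
  have hmono : ∀ β γ, β < γ → ∀ r ∈ R β, ∀ s ∈ R γ, r ≤ s := by
    intro β γ hβγ r hr s hs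
    exact le_of_mul_le_mul_left (by linarith [hsupport β γ r hr, hsupport γ β s hs])
      (sub_pos.2 hβγ)
  have hne : ∀ α, (R α).Nonempty := by
    intro α
    obtain ⟨v, hv, hev⟩ :=
      exists_mulVec_eq_smul_of_isLeast (hP2.sub (hL.smul (.all α))) (hq α)
    exact ⟨_, by rw [hR]; exact ⟨v, hv, hev, rfl⟩⟩
  exact ⟨csSup_le_csSup_of_forall_le hne hmono h12, csInf_le_csInf_of_forall_le hne hmono h12⟩
end

section
/- The uncertainty curve of the complete graph on N vertices is γ(s) = [N - s(N-2) - 2√(1 - (N-2)(s-1) - (N-1)(s-1)²)] / [4 + (N-2)²/(N-1)] for 0 ≤ s ≤ N/(N-1); equivalently, the minimal graph spread g and spectral spread s of unit vectors of the form (cos θ, sin θ/√(N-1), …, sin θ/√(N-1)) satisfy the ellipse equation (2g - 1)² + (N-1)(s + (N-2)g/(N-1) - 1)² = 1. -/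
/-!
For a unit vector `x` on `K_N`, `s = (N - (∑ x)²)/(N - 1)` and `g = 1 - x u₀²`. So fixing `s` fixes
`|∑ x| = √(N - (N-1)s)`, and minimising `g` means maximising `|x u₀|`. Cauchy–Schwarz on the other
`N - 1` coordinates gives `|N x u₀ - ∑ x| ≤ (N - 1)√s`, with equality for a vector that is constant
off `u₀`. On such vectors `(a, b, …, b)` the same formulas give the ellipse.
-/

open Matrix BigOperators Finset Real

section QuadraticForms

variable {ι R : Type*} [Fintype ι] [DecidableEq ι]

theorem sum_ite_eq_add_card_sub_one_mul [CommRing R] (i₀ : ι) (a b : R) :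
    ∑ i, (if i = i₀ then a else b) = a + ((Fintype.card ι : R) - 1) * b := by
  have h (i : ι) : (if i = i₀ then a else b) = (if i = i₀ then a - b else 0) + b := by
    split_ifs <;> ring
  simp only [h, sum_add_distrib, Fintype.sum_ite_eq', sum_const, card_univ, nsmul_eq_mul]
  ring

theorem dotProduct_mulVec_ite_eq [CommRing R] (c : R) (x : ι → R) :
    x ⬝ᵥ ((fun i j => if i = j then 1 else -c : Matrix ι ι R) *ᵥ x) =
      (1 + c) * ∑ i, x i ^ 2 - c * (∑ i, x i) ^ 2 := by
  have hrow (i : ι) : ((fun i j => if i = j then 1 else -c : Matrix ι ι R) *ᵥ x) i =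
      (1 + c) * x i - c * ∑ j, x j := by
    have h (j : ι) :
        (if i = j then 1 else -c) * x j = (if i = j then (1 + c) * x j else 0) - c * x j := by
      split_ifs <;> ring
    simp only [mulVec, dotProduct, h, sum_sub_distrib, Fintype.sum_ite_eq, mul_sum]
  calc x ⬝ᵥ _ = ∑ i, ((1 + c) * x i ^ 2 - c * (∑ j, x j) * x i) :=
        sum_congr rfl fun i _ => by rw [hrow]; ring
    _ = _ := by rw [sum_sub_distrib, ← mul_sum, ← mul_sum]; ring

theorem dotProduct_diagonal_ite_mulVec [CommRing R] (i₀ : ι) (x : ι → R) :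
    x ⬝ᵥ (diagonal (fun i => if i = i₀ then 0 else 1) *ᵥ x) = ∑ i, x i ^ 2 - x i₀ ^ 2 := by
  have h (i : ι) :
      x i * ((if i = i₀ then 0 else 1) * x i) = x i ^ 2 - if i = i₀ then x i ^ 2 else 0 := by
    split_ifs <;> ring
  simp only [dotProduct, mulVec_diagonal, h, sum_sub_distrib, Fintype.sum_ite_eq']

theorem sq_sum_sub_apply_le (i₀ : ι) (y : ι → ℝ) :
    (∑ i, y i - y i₀) ^ 2 ≤ ((Fintype.card ι : ℝ) - 1) * (∑ i, y i ^ 2 - y i₀ ^ 2) := by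
  have hi₀ := mem_univ i₀
  have h := sq_sum_le_card_mul_sum_sq (s := univ.erase i₀) (f := y)
  rwa [sum_erase_eq_sub hi₀, sum_erase_eq_sub hi₀, card_erase_of_mem hi₀, card_univ,
    Nat.cast_sub (Fintype.card_pos_iff.mpr ⟨i₀⟩), Nat.cast_one] at h

end QuadraticForms

section RealAlgebra

theorem ellipse_of_sq_add_mul_sq_eq_one {n a b : ℝ} (hn : n ≠ 1)
    (h : a ^ 2 + (n - 1) * b ^ 2 = 1) :
    (2 * (1 - a ^ 2) - 1) ^ 2 +
      (n - 1) * ((n - (a + (n - 1) * b) ^ 2) / (n - 1) + (n - 2) * (1 - a ^ 2) / (n - 1) - 1) ^ 2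
      = 1 := by
  have hn' : n - 1 ≠ 0 := sub_ne_zero.mpr hn
  have hmid : (n - (a + (n - 1) * b) ^ 2) / (n - 1) + (n - 2) * (1 - a ^ 2) / (n - 1) - 1
      = -2 * a * b := by
    rw [← add_div, div_sub_one hn', div_eq_iff hn']
    linear_combination (1 - n) * h
  rw [hmid]
  linear_combination 4 * a ^ 2 * h

theorem sq_le_of_sq_sub_le_mul {n S w a : ℝ} (hn : 1 ≤ n) (hw : 0 ≤ w)
    (hS : S ^ 2 + (n - 1) * w ^ 2 = n) (h : (S - a) ^ 2 ≤ (n - 1) * (1 - a ^ 2)) :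
    a ^ 2 ≤ ((|S| + (n - 1) * w) / n) ^ 2 := by
  have hn0 : 0 < n := by linarith
  have hsq : (n * a - S) ^ 2 ≤ ((n - 1) * w) ^ 2 := by
    linear_combination n * h - (n - 1) * hS
  obtain ⟨hlo, hhi⟩ := abs_le_of_sq_le_sq' hsq (by positivity)
  have hna : |n * a| ≤ |S| + (n - 1) * w :=
    abs_le.mpr ⟨by linarith [neg_abs_le S], by linarith [le_abs_self S]⟩
  rw [div_pow, le_div_iff₀ (by positivity)]
  calc a ^ 2 * n ^ 2 = (n * a) ^ 2 := by ring
    _ ≤ _ := sq_le_sq.mpr (hna.trans (le_abs_self _))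

theorem uncertaintyCurve_formula_eq {n s : ℝ} (hn : 1 < n) (hs0 : 0 ≤ s)
    (hs1 : s ≤ n / (n - 1)) :
    (n - s * (n - 2) - 2 * √(1 - (n - 2) * (s - 1) - (n - 1) * (s - 1) ^ 2)) /
        (4 + (n - 2) ^ 2 / (n - 1))
      = 1 - ((√(n - (n - 1) * s) + (n - 1) * √s) / n) ^ 2 := by
  have hn' : 0 < n - 1 := by linarith
  have hT : 0 ≤ n - (n - 1) * s := by rw [le_div_iff₀ hn'] at hs1; linarith
  have hfac : 1 - (n - 2) * (s - 1) - (n - 1) * (s - 1) ^ 2 = s * (n - (n - 1) * s) := by ring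
  rw [hfac, sqrt_mul hs0]
  have hu := sq_sqrt hT
  have hw := sq_sqrt hs0
  generalize √(n - (n - 1) * s) = u at hu ⊢
  generalize √s = w at hw ⊢
  field_simp
  linear_combination n ^ 2 * hu + n ^ 2 * (n - 1) ^ 2 * hw

end RealAlgebra

section CompleteGraph

variable {N : ℕ}

noncomputable def completeGraphLaplacian (N : ℕ) : Matrix (Fin N) (Fin N) ℝ :=
  fun i j => if i = j then 1 else -(1 / ((N : ℝ) - 1))

/-- `P_{u₀}²` for the complete graph: every vertex other than `u₀` is at distance `1` from it. -/
def vertexSpreadMatrix (u₀ : Fin N) : Matrix (Fin N) (Fin N) ℝ :=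
  diagonal fun i => if i = u₀ then 0 else 1

theorem dotProduct_completeGraphLaplacian_mulVec (hN : 2 ≤ N) {x : Fin N → ℝ}
    (hx : ∑ i, x i ^ 2 = 1) :
    x ⬝ᵥ (completeGraphLaplacian N *ᵥ x) = (N - (∑ i, x i) ^ 2) / (N - 1) := by
  have hN' : (N : ℝ) - 1 ≠ 0 := by
    have : (2 : ℝ) ≤ N := by exact_mod_cast hN
    linarith
  unfold completeGraphLaplacian
  rw [dotProduct_mulVec_ite_eq, hx]
  field_simp
  ring

theorem dotProduct_vertexSpreadMatrix_mulVec (u₀ : Fin N) (x : Fin N → ℝ) :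
    x ⬝ᵥ (vertexSpreadMatrix u₀ *ᵥ x) = ∑ i, x i ^ 2 - x u₀ ^ 2 :=
  dotProduct_diagonal_ite_mulVec u₀ x

theorem spreads_ite (hN : 2 ≤ N) (u₀ : Fin N) {a b : ℝ} (hab : a ^ 2 + (N - 1) * b ^ 2 = 1) :
    let x : Fin N → ℝ := fun i => if i = u₀ then a else b
    ∑ i, x i ^ 2 = 1 ∧
      x ⬝ᵥ (completeGraphLaplacian N *ᵥ x) = (N - (a + (N - 1) * b) ^ 2) / (N - 1) ∧
      x ⬝ᵥ (vertexSpreadMatrix u₀ *ᵥ x) = 1 - a ^ 2 := by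
  intro x
  have hx : ∑ i, x i ^ 2 = 1 := by
    simp only [x, apply_ite (· ^ 2), sum_ite_eq_add_card_sub_one_mul, Fintype.card_fin, hab]
  refine ⟨hx, ?_, ?_⟩
  · rw [dotProduct_completeGraphLaplacian_mulVec hN hx, sum_ite_eq_add_card_sub_one_mul,
      Fintype.card_fin]
  · rw [dotProduct_vertexSpreadMatrix_mulVec, hx]
    simp [x]

theorem ellipse_of_ite (hN : 2 ≤ N) (u₀ : Fin N) {a b : ℝ} (hab : a ^ 2 + (N - 1) * b ^ 2 = 1) :
    let x : Fin N → ℝ := fun i => if i = u₀ then a else b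
    let s := x ⬝ᵥ (completeGraphLaplacian N *ᵥ x)
    let g := x ⬝ᵥ (vertexSpreadMatrix u₀ *ᵥ x)
    (2 * g - 1) ^ 2 + ((N : ℝ) - 1) * (s + ((N : ℝ) - 2) * g / ((N : ℝ) - 1) - 1) ^ 2 = 1 := by
  obtain ⟨-, hs, hg⟩ := spreads_ite hN u₀ hab
  intro x s g
  rw [show s = _ from hs, show g = _ from hg]
  exact ellipse_of_sq_add_mul_sq_eq_one (by norm_cast; omega) hab

theorem isLeast_vertexSpread (hN : 2 ≤ N) (u₀ : Fin N) {s : ℝ} (hs0 : 0 ≤ s)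
    (hs1 : s ≤ N / (N - 1)) :
    IsLeast {g : ℝ | ∃ x : Fin N → ℝ, (∑ i, x i ^ 2 = 1) ∧
        x ⬝ᵥ (completeGraphLaplacian N *ᵥ x) = s ∧ g = x ⬝ᵥ (vertexSpreadMatrix u₀ *ᵥ x)}
      (1 - ((√(N - (N - 1) * s) + (N - 1) * √s) / N) ^ 2) := by
  have hN1 : (1 : ℝ) < N := by exact_mod_cast hN
  have hN' : (N : ℝ) - 1 ≠ 0 := by linarith
  have hT : 0 ≤ (N : ℝ) - (N - 1) * s := by rw [le_div_iff₀ (by linarith)] at hs1; linarith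
  set u := √(N - (N - 1) * s)
  set w := √s
  have hu : u ^ 2 = N - (N - 1) * s := sq_sqrt hT
  have hw : w ^ 2 = s := sq_sqrt hs0
  constructor
  · -- the minimiser `(u / N) • 𝟙 + w • (e_{u₀} - 𝟙 / N)`, where the bound below is an equality
    have hab : ((u + (N - 1) * w) / N) ^ 2 + (N - 1) * ((u - w) / N) ^ 2 = 1 := by
      field_simp
      linear_combination N * hu + N * (N - 1) * hw
    obtain ⟨hx, hs, hg⟩ := spreads_ite hN u₀ hab
    refine ⟨_, hx, ?_, hg.symm⟩
    have hsum : (u + (N - 1) * w) / N + (N - 1) * ((u - w) / N) = u := by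
      field_simp
      ring
    rw [hs, hsum, hu]
    field_simp
    ring
  · rintro g ⟨y, hy, hys, rfl⟩
    rw [dotProduct_completeGraphLaplacian_mulVec hN hy] at hys
    have hS2 : (∑ i, y i) ^ 2 = N - (N - 1) * s := by
      rw [← hys]
      field_simp
      ring
    have hS : (∑ i, y i) ^ 2 + (N - 1) * w ^ 2 = N := by rw [hS2, hw]; ring
    have hSu : |∑ i, y i| = u := by rw [← sqrt_sq_eq_abs, hS2]
    have hCS := sq_sum_sub_apply_le u₀ y
    rw [hy, Fintype.card_fin] at hCS
    have := sq_le_of_sq_sub_le_mul hN1.le (sqrt_nonneg s) hS hCS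
    rw [dotProduct_vertexSpreadMatrix_mulVec, hy, ← hSu]
    linarith

end CompleteGraph

/-- The uncertainty curve of the complete graph on `N` vertices:
the θ-family of unit vectors `(cos θ, sin θ/√(N-1), …)` traces the ellipse
`(2g-1)² + (N-1)(s + (N-2)g/(N-1) - 1)² = 1`, and for `0 ≤ s ≤ N/(N-1)` the minimal
graph spread among unit vectors with spectral spread `s` equals
`[N - s(N-2) - 2√(1-(N-2)(s-1)-(N-1)(s-1)²)] / [4 + (N-2)²/(N-1)]`. -/
theorem stmt11 {N : ℕ} (hN : 3 ≤ N)
    (L : Matrix (Fin N) (Fin N) ℝ)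
    (hL : L = fun i j => if i = j then (1 : ℝ) else -(1 / ((N : ℝ) - 1)))
    (P2 : Matrix (Fin N) (Fin N) ℝ)
    (hP2 : P2 = Matrix.diagonal (fun i : Fin N => if (i : ℕ) = 0 then (0 : ℝ) else 1)) :
    (∀ θ : ℝ,
      let x : Fin N → ℝ := fun i =>
        if (i : ℕ) = 0 then Real.cos θ else Real.sin θ / Real.sqrt ((N : ℝ) - 1)
      let s : ℝ := x ⬝ᵥ (L *ᵥ x)
      let g : ℝ := x ⬝ᵥ (P2 *ᵥ x)
      (2 * g - 1) ^ 2 +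
        ((N : ℝ) - 1) * (s + ((N : ℝ) - 2) * g / ((N : ℝ) - 1) - 1) ^ 2 = 1) ∧
    (∀ s : ℝ, 0 ≤ s → s ≤ (N : ℝ) / ((N : ℝ) - 1) →
      IsLeast {g : ℝ | ∃ x : Fin N → ℝ, (∑ i, (x i) ^ 2 = 1) ∧
          x ⬝ᵥ (L *ᵥ x) = s ∧ g = x ⬝ᵥ (P2 *ᵥ x)}
        (((N : ℝ) - s * ((N : ℝ) - 2) -
            2 * Real.sqrt (1 - ((N : ℝ) - 2) * (s - 1) - ((N : ℝ) - 1) * (s - 1) ^ 2)) /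
          (4 + ((N : ℝ) - 2) ^ 2 / ((N : ℝ) - 1)))) := by
  have hN2 : 2 ≤ N := by omega
  have hN1 : (1 : ℝ) < N := by exact_mod_cast hN2
  have : NeZero N := ⟨by omega⟩
  simp only [Fin.val_eq_zero_iff] at hP2 ⊢
  subst hL hP2
  refine ⟨fun θ => ellipse_of_ite hN2 0 ?_, fun s hs0 hs1 => ?_⟩
  · rw [div_pow, sq_sqrt (by linarith), mul_div_cancel₀ _ (by linarith)]
    exact cos_sq_add_sin_sq θ
  · rw [uncertaintyCurve_formula_eq hN1 hs0 hs1]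
    exact isLeast_vertexSpread hN2 0 hs0 hs1
end

section
/- For the complete graph on N vertices with distance matrix P = diag(0,1,…,1), any unit vector x achieving the minimum of x^T P² x subject to x^T L x = s (for s in the open interval (0, N/(N-1))) has all coordinates except the first equal to each other. -/
/-!
Both constraints only see `∑ xᵢ²` and `∑ xᵢ`, and the objective is the tail energy
`∑_{i ≠ 0} xᵢ²`. With `a = x₀`, `σ` the tail sum and `Q` the tail energy, Cauchy–Schwarz on the
tail reads `q(a) ≤ 0` for the quadratic `q(b) = n b² + (a + σ - b)² - n (a² + Q)`. Every root `b`
of `q` gives a competitor `(b, t, …, t)` with the same sum and norm, so minimality forces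
`b² ≤ a²`. As `q` has positive leading coefficient, `a` can only dominate both roots in absolute
value if it is one of them; hence Cauchy–Schwarz on the tail is an equality and the tail is
constant.
-/

open Matrix BigOperators Finset

section LagrangeIdentity

variable {ι R : Type*}

theorem Finset.sum_sum_sub_sq [CommRing R] (s : Finset ι) (f : ι → R) :
    ∑ i ∈ s, ∑ j ∈ s, (f i - f j) ^ 2 = 2 * (#s * ∑ i ∈ s, f i ^ 2 - (∑ i ∈ s, f i) ^ 2) := by
  simp only [sub_sq, sum_add_distrib, sum_sub_distrib, sum_const, nsmul_eq_mul, ← mul_sum,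
    ← sum_mul]
  ring

theorem Finset.eq_of_sq_sum_eq_card_mul_sum_sq [CommRing R] [LinearOrder R]
    [IsStrictOrderedRing R] {s : Finset ι} {f : ι → R}
    (h : (∑ i ∈ s, f i) ^ 2 = #s * ∑ i ∈ s, f i ^ 2) :
    ∀ i ∈ s, ∀ j ∈ s, f i = f j := by
  have hzero : ∑ i ∈ s, ∑ j ∈ s, (f i - f j) ^ 2 = 0 := by
    rw [sum_sum_sub_sq, h, sub_self, mul_zero]
  intro i hi j hj
  have hrow := (sum_eq_zero_iff_of_nonneg fun i _ => sum_nonneg fun j _ =>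
    sq_nonneg (f i - f j)).1 hzero i hi
  exact sub_eq_zero.1 <| (pow_eq_zero_iff two_ne_zero).1 <|
    (sum_eq_zero_iff_of_nonneg fun j _ => sq_nonneg (f i - f j)).1 hrow j hj

end LagrangeIdentity

theorem quadratic_eq_zero_of_nonpos_of_forall_root_sq_le {a b c z : ℝ} (ha : 0 < a)
    (hz : a * z ^ 2 + b * z + c ≤ 0)
    (hroots : ∀ r, a * r ^ 2 + b * r + c = 0 → r ^ 2 ≤ z ^ 2) :
    a * z ^ 2 + b * z + c = 0 := by
  refine hz.antisymm (not_lt.1 fun hneg => ?_)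
  have hd : 0 < discrim a b c := by
    have : discrim a b c = (2 * a * z + b) ^ 2 - 4 * a * (a * z ^ 2 + b * z + c) := by
      rw [discrim]; ring
    nlinarith
  set e := √(discrim a b c)
  have hee : discrim a b c = e * e := (Real.mul_self_sqrt hd.le).symm
  set r₁ := (-b - e) / (2 * a) with hr₁
  set r₂ := (-b + e) / (2 * a) with hr₂
  have hr : r₁ < r₂ := div_lt_div_of_pos_right (by linarith [Real.sqrt_pos.2 hd]) (by linarith)
  have hfac : a * (z - r₁) * (z - r₂) < 0 := by
    refine Eq.trans_lt ?_ hneg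
    rw [hr₁, hr₂]; field_simp; rw [discrim] at hee; linear_combination hee
  have hroot (r : ℝ) (h : r = r₁ ∨ r = r₂) : |r| ≤ |z| :=
    sq_le_sq.1 <| hroots r <| by rw [sq]; exact (quadratic_eq_zero_iff ha.ne' hee r).2 h.symm
  have h₁ : r₁ < z := by
    by_contra! h
    nlinarith [mul_nonneg (mul_nonneg ha.le (sub_nonneg.2 h)) (sub_nonneg.2 (h.trans hr.le))]
  have h₂ : z < r₂ := by
    by_contra! h
    nlinarith [mul_nonneg (mul_nonneg ha.le (sub_nonneg.2 (hr.le.trans h))) (sub_nonneg.2 h)]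
  rcases le_or_gt 0 z with hz0 | hz0
  · have := hroot r₂ (.inr rfl)
    rw [abs_of_pos (hz0.trans_lt h₂), abs_of_nonneg hz0] at this
    linarith
  · have := hroot r₁ (.inl rfl)
    rw [abs_of_neg (h₁.trans hz0), abs_of_neg hz0] at this
    linarith

theorem Fin.succ_eq_of_forall_sum_sq_succ_le {n : ℕ} (x : Fin (n + 1) → ℝ)
    (hmin : ∀ y : Fin (n + 1) → ℝ, ∑ i, y i ^ 2 = ∑ i, x i ^ 2 → ∑ i, y i = ∑ i, x i →
      ∑ i : Fin n, x i.succ ^ 2 ≤ ∑ i : Fin n, y i.succ ^ 2)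
    (i j : Fin n) : x i.succ = x j.succ := by
  have hn : (n : ℝ) ≠ 0 := Nat.cast_ne_zero.2 i.pos.ne'
  set σ := ∑ i : Fin n, x i.succ
  set Q := ∑ i : Fin n, x i.succ ^ 2
  set a := x 0
  have hroot (b : ℝ)
      (hb : (n + 1) * b ^ 2 + -2 * (a + σ) * b + ((a + σ) ^ 2 - n * (a ^ 2 + Q)) = 0) :
      b ^ 2 ≤ a ^ 2 := by
    set t := (a + σ - b) / n
    have ht : n * t ^ 2 = a ^ 2 + Q - b ^ 2 := by
      simp only [t]; field_simp; linear_combination hb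
    have := hmin (Fin.cons b fun _ => t)
      (by simp only [Fin.sum_univ_succ, Fin.cons_zero, Fin.cons_succ, sum_const,
            nsmul_eq_mul]; linarith)
      (by simp only [Fin.sum_univ_succ, Fin.cons_zero, Fin.cons_succ, sum_const,
            nsmul_eq_mul, t]; field_simp; ring)
    simp only [Fin.cons_succ, sum_const, nsmul_eq_mul] at this
    linarith
  have hcs : σ ^ 2 ≤ n * Q := by
    simpa using sq_sum_le_card_mul_sum_sq (s := univ) (f := fun i : Fin n => x i.succ)
  have hq := quadratic_eq_zero_of_nonpos_of_forall_root_sq_le (by positivity) (by linarith) hroot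
  exact eq_of_sq_sum_eq_card_mul_sum_sq (s := univ) (f := fun i : Fin n => x i.succ)
    (by simp only [card_fin]; linarith) i (mem_univ _) j (mem_univ _)

theorem dotProduct_mulVec_ite_one_neg {ι R : Type*} [Fintype ι] [DecidableEq ι] [CommRing R]
    (c : R) (v : ι → R) :
    v ⬝ᵥ ((fun i j => if i = j then (1 : R) else -c : Matrix ι ι R) *ᵥ v)
      = (1 + c) * ∑ i, v i ^ 2 - c * (∑ i, v i) ^ 2 := by
  have hentry (i j : ι) :
      (if i = j then (1 : R) else -c) = (1 + c) * (if i = j then 1 else 0) - c := by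
    split_ifs <;> ring
  have hrow (i : ι) : ((fun i j => if i = j then (1 : R) else -c : Matrix ι ι R) *ᵥ v) i
      = (1 + c) * v i - c * ∑ j, v j := by
    simp [mulVec, dotProduct, hentry, sub_mul, sum_sub_distrib, ← mul_sum]
  simp only [dotProduct, hrow, mul_sub, sum_sub_distrib, mul_left_comm _ (1 + c),
    mul_left_comm _ c, ← mul_sum, ← sum_mul, sq]

theorem dotProduct_diagonal_ite_val_eq_zero_mulVec {n : ℕ} {R : Type*} [CommSemiring R]
    (v : Fin (n + 1) → R) :
    v ⬝ᵥ (diagonal (fun i : Fin (n + 1) => if (i : ℕ) = 0 then (0 : R) else 1) *ᵥ v)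
      = ∑ i : Fin n, v i.succ ^ 2 := by
  simp [dotProduct, mulVec_diagonal, Fin.sum_univ_succ, sq]

theorem stmt12_general {N : ℕ}
    (L : Matrix (Fin N) (Fin N) ℝ)
    (hL : L = fun i j => if i = j then (1 : ℝ) else -(1 / ((N : ℝ) - 1)))
    (P2 : Matrix (Fin N) (Fin N) ℝ)
    (hP2 : P2 = Matrix.diagonal (fun i : Fin N => if (i : ℕ) = 0 then (0 : ℝ) else 1))
    (s : ℝ)
    (x : Fin N → ℝ) (hx_unit : ∑ i, (x i) ^ 2 = 1)
    (hx_s : x ⬝ᵥ (L *ᵥ x) = s)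
    (hx_min : ∀ y : Fin N → ℝ, (∑ i, (y i) ^ 2 = 1) → y ⬝ᵥ (L *ᵥ y) = s →
      x ⬝ᵥ (P2 *ᵥ x) ≤ y ⬝ᵥ (P2 *ᵥ y)) :
    ∀ i j : Fin N, (i : ℕ) ≠ 0 → (j : ℕ) ≠ 0 → x i = x j := by
  subst hL hP2 hx_s
  rcases N with _ | n
  · exact fun i => i.elim0
  have htail := Fin.succ_eq_of_forall_sum_sq_succ_le x fun y hy_sq hy_sum => by
    have := hx_min y (hy_sq.trans hx_unit) <| by
      rw [dotProduct_mulVec_ite_one_neg, dotProduct_mulVec_ite_one_neg, hy_sq, hy_sum]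
    simpa only [dotProduct_diagonal_ite_val_eq_zero_mulVec] using this
  intro i j hi hj
  obtain ⟨i, rfl⟩ := Fin.exists_succ_eq.2 (Fin.val_ne_zero_iff.1 hi)
  obtain ⟨j, rfl⟩ := Fin.exists_succ_eq.2 (Fin.val_ne_zero_iff.1 hj)
  exact htail i j

/-- For the complete graph on `N ≥ 3` vertices with distance matrix
`P = diag(0,1,…,1)`, any unit vector `x` achieving the minimum of `xᵀP²x` subject to
`xᵀLx = s` (for `s` in the open interval `(0, N/(N-1))`) has all coordinates except
the first equal to each other. -/
theorem stmt12 {N : ℕ} (hN : 3 ≤ N)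
    (L : Matrix (Fin N) (Fin N) ℝ)
    (hL : L = fun i j => if i = j then (1 : ℝ) else -(1 / ((N : ℝ) - 1)))
    (P2 : Matrix (Fin N) (Fin N) ℝ)
    (hP2 : P2 = Matrix.diagonal (fun i : Fin N => if (i : ℕ) = 0 then (0 : ℝ) else 1))
    (s : ℝ) (hs0 : 0 < s) (hs1 : s < (N : ℝ) / ((N : ℝ) - 1))
    (x : Fin N → ℝ) (hx_unit : ∑ i, (x i) ^ 2 = 1)
    (hx_s : x ⬝ᵥ (L *ᵥ x) = s)
    (hx_min : ∀ y : Fin N → ℝ, (∑ i, (y i) ^ 2 = 1) → y ⬝ᵥ (L *ᵥ y) = s →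
      x ⬝ᵥ (P2 *ᵥ x) ≤ y ⬝ᵥ (P2 *ᵥ y)) :
    ∀ i j : Fin N, (i : ℕ) ≠ 0 → (j : ℕ) ≠ 0 → x i = x j :=
  stmt12_general L hL P2 hP2 s x hx_unit hx_s hx_min
end

section
/- For the star graph on N vertices centered at u0, the spectral and graph spreads of the unit vector x(θ) = (cos θ, sin θ/√(N-1), …, sin θ/√(N-1)) are Δ_s² = 1 - sin 2θ and Δ_{g,u0}² = (1 - cos 2θ)/2, hence they satisfy (Δ_s² - 1)² + (2Δ_{g,u0}² - 1)² = 1; the lower envelope γ(s) = (1 - √(s(2-s)))/2 for 0 ≤ s ≤ 2 does not depend on N. -/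
/-!
Write `x = (a, y)` with `a` the centre coordinate. For a unit vector, the graph spread is
`|y|² = 1 - a²` and the spectral spread is `1 - 2 a (∑ yᵢ) / √(N-1)`; Cauchy–Schwarz on the
leaves gives `(∑ yᵢ)² ≤ (N-1) |y|²`, so `(Δs - 1)² + (2Δg - 1)² ≤ 4a²(1 - a²) + (1 - 2a²)² = 1`.
The vectors `x(θ)` attain the boundary circle, whose lower half is the envelope `γ`.
-/

open Matrix Real

noncomputable section

theorem le_of_sub_one_sq_add_sq_le_one {s g : ℝ} (h : (s - 1) ^ 2 + (2 * g - 1) ^ 2 ≤ 1) :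
    (1 - √(s * (2 - s))) / 2 ≤ g := by
  have := abs_le_sqrt (x := 2 * g - 1) (y := s * (2 - s)) (by linarith)
  linarith [neg_abs_le (2 * g - 1)]

theorem exists_sin_two_mul_cos_two_mul {s : ℝ} (hs0 : 0 ≤ s) (hs2 : s ≤ 2) :
    ∃ θ : ℝ, sin (2 * θ) = 1 - s ∧ cos (2 * θ) = √(s * (2 - s)) := by
  refine ⟨arcsin (1 - s) / 2, ?_, ?_⟩
  · rw [mul_div_cancel₀ _ two_ne_zero, sin_arcsin (by linarith) (by linarith)]
  · rw [mul_div_cancel₀ _ two_ne_zero, cos_arcsin]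
    ring_nf

-- `n` is the number of leaves and vertex `0` is the centre.
namespace StarGraph

variable {n : ℕ}

def laplacian (n : ℕ) : Matrix (Fin (n + 1)) (Fin (n + 1)) ℝ := fun i j =>
  if i = j then 1 else if (i : ℕ) = 0 ∨ (j : ℕ) = 0 then -(1 / √n) else 0

def distanceDiagonal (n : ℕ) : Matrix (Fin (n + 1)) (Fin (n + 1)) ℝ :=
  diagonal fun i => if (i : ℕ) = 0 then 0 else 1

def vec (n : ℕ) (θ : ℝ) : Fin (n + 1) → ℝ := fun i =>
  if (i : ℕ) = 0 then cos θ else sin θ / √n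

theorem dotProduct_laplacian_mulVec (x : Fin (n + 1) → ℝ) :
    x ⬝ᵥ (laplacian n *ᵥ x) =
      x 0 ^ 2 + ∑ j : Fin n, x j.succ ^ 2 - 2 / √n * x 0 * ∑ j : Fin n, x j.succ := by
  simp only [dotProduct, mulVec, laplacian, Fin.val_eq_zero_iff, one_div, ite_mul, one_mul,
    neg_mul, zero_mul, Fin.sum_univ_succ, or_true, ↓reduceIte, Fin.succ_ne_zero, or_false, mul_add,
    mul_ite, mul_neg, Finset.sum_add_distrib, Finset.sum_neg_distrib, ← Finset.sum_mul,
    (Fin.succ_ne_zero _).symm, ← Finset.mul_sum, Fin.succ_inj, Finset.sum_ite_eq, Finset.mem_univ, sq]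
  ring

theorem dotProduct_distanceDiagonal_mulVec (x : Fin (n + 1) → ℝ) :
    x ⬝ᵥ (distanceDiagonal n *ᵥ x) = ∑ j : Fin n, x j.succ ^ 2 := by
  simp [distanceDiagonal, dotProduct, mulVec_diagonal, Fin.sum_univ_succ, sq]

theorem vec_zero (θ : ℝ) : vec n θ 0 = cos θ := rfl

theorem vec_succ (θ : ℝ) (j : Fin n) : vec n θ j.succ = sin θ / √n := by
  simp [vec]

theorem sum_sq_vec (hn : 0 < n) (θ : ℝ) : ∑ i, vec n θ i ^ 2 = 1 := by
  have hn' : (0 : ℝ) < n := by exact_mod_cast hn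
  rw [Fin.sum_univ_succ]
  simp only [vec_zero, vec_succ, div_pow, sq_sqrt hn'.le, Finset.sum_const, Finset.card_univ,
    Fintype.card_fin, nsmul_eq_mul]
  field_simp
  exact cos_sq_add_sin_sq θ

theorem dotProduct_laplacian_mulVec_vec (hn : 0 < n) (θ : ℝ) :
    vec n θ ⬝ᵥ (laplacian n *ᵥ vec n θ) = 1 - sin (2 * θ) := by
  have hn' : (0 : ℝ) < n := by exact_mod_cast hn
  rw [dotProduct_laplacian_mulVec]
  simp only [vec_zero, vec_succ, div_pow, sq_sqrt hn'.le, Finset.sum_const, Finset.card_univ,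
    Fintype.card_fin, nsmul_eq_mul]
  field_simp
  rw [sq_sqrt hn'.le, sin_two_mul]
  linear_combination (n : ℝ) * cos_sq_add_sin_sq θ

theorem dotProduct_distanceDiagonal_mulVec_vec (hn : 0 < n) (θ : ℝ) :
    vec n θ ⬝ᵥ (distanceDiagonal n *ᵥ vec n θ) = (1 - cos (2 * θ)) / 2 := by
  have hn' : (0 : ℝ) < n := by exact_mod_cast hn
  rw [dotProduct_distanceDiagonal_mulVec]
  simp only [vec_succ, div_pow, sq_sqrt hn'.le, Finset.sum_const, Finset.card_univ,
    Fintype.card_fin, nsmul_eq_mul]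
  field_simp
  rw [cos_two_mul]
  linear_combination 2 * cos_sq_add_sin_sq θ

theorem spreads_sub_one_sq_add_sq_le_one (x : Fin (n + 1) → ℝ) (hx : ∑ i, x i ^ 2 = 1) :
    (x ⬝ᵥ (laplacian n *ᵥ x) - 1) ^ 2 + (2 * x ⬝ᵥ (distanceDiagonal n *ᵥ x) - 1) ^ 2 ≤ 1 := by
  rw [dotProduct_laplacian_mulVec, dotProduct_distanceDiagonal_mulVec]
  rw [Fin.sum_univ_succ] at hx
  set S := ∑ j : Fin n, x j.succ
  set Q := ∑ j : Fin n, x j.succ ^ 2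
  have hS : (S / √n) ^ 2 ≤ Q := by
    rcases Nat.eq_zero_or_pos n with rfl | hn
    · simp [S, Q]
    have hn' : (0 : ℝ) < n := by exact_mod_cast hn
    have := sq_sum_le_card_mul_sum_sq (s := Finset.univ) (f := fun j : Fin n => x j.succ)
    rw [div_pow, sq_sqrt hn'.le, div_le_iff₀ hn']
    simpa [mul_comm] using this
  have hx0 : x 0 ^ 2 = 1 - Q := by linarith
  calc (x 0 ^ 2 + Q - 2 / √n * x 0 * S - 1) ^ 2 + (2 * Q - 1) ^ 2
      = 4 * x 0 ^ 2 * (S / √n) ^ 2 + (2 * Q - 1) ^ 2 := by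
        rw [show x 0 ^ 2 + Q - 2 / √n * x 0 * S - 1 = -(2 * x 0 * (S / √n)) by
          linear_combination hx]
        ring
    _ ≤ 4 * (1 - Q) * Q + (2 * Q - 1) ^ 2 := by rw [hx0]; gcongr; nlinarith
    _ = 1 := by ring

end StarGraph

end

/-- For the star graph on `N ≥ 2` vertices centered at vertex `0`, the unit vectors
`x(θ) = (cos θ, sin θ/√(N-1), …)` have spectral spread `1 - sin 2θ` and graph spread
`(1 - cos 2θ)/2`, hence satisfy `(Δs-1)² + (2Δg-1)² = 1`; moreover the lower envelope
`γ(s) = (1 - √(s(2-s)))/2` for `0 ≤ s ≤ 2` does not depend on `N`. -/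
theorem stmt13 {N : ℕ} (hN : 2 ≤ N)
    (L : Matrix (Fin N) (Fin N) ℝ)
    (hL : L = fun (i j : Fin N) => if i = j then (1 : ℝ)
      else if (i : ℕ) = 0 ∨ (j : ℕ) = 0 then -(1 / Real.sqrt ((N : ℝ) - 1)) else 0)
    (P2 : Matrix (Fin N) (Fin N) ℝ)
    (hP2 : P2 = Matrix.diagonal (fun i : Fin N => if (i : ℕ) = 0 then (0 : ℝ) else 1)) :
    (∀ θ : ℝ,
      let x : Fin N → ℝ := fun i =>
        if (i : ℕ) = 0 then Real.cos θ else Real.sin θ / Real.sqrt ((N : ℝ) - 1)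
      let Δs : ℝ := x ⬝ᵥ (L *ᵥ x)
      let Δg : ℝ := x ⬝ᵥ (P2 *ᵥ x)
      Δs = 1 - Real.sin (2 * θ) ∧
      Δg = (1 - Real.cos (2 * θ)) / 2 ∧
      (Δs - 1) ^ 2 + (2 * Δg - 1) ^ 2 = 1) ∧
    (∀ s : ℝ, 0 ≤ s → s ≤ 2 →
      IsLeast {g : ℝ | ∃ x : Fin N → ℝ, (∑ i, (x i) ^ 2 = 1) ∧
          x ⬝ᵥ (L *ᵥ x) = s ∧ g = x ⬝ᵥ (P2 *ᵥ x)}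
        ((1 - Real.sqrt (s * (2 - s))) / 2)) := by
  obtain ⟨n, rfl⟩ : ∃ n, N = n + 1 := ⟨N - 1, by omega⟩
  have hn : 0 < n := by omega
  have hr : ((n + 1 : ℕ) : ℝ) - 1 = n := by push_cast; ring
  obtain rfl : L = StarGraph.laplacian n := by rw [hL, hr]; rfl
  obtain rfl : P2 = StarGraph.distanceDiagonal n := hP2
  have hvec (θ : ℝ) : (fun i : Fin (n + 1) =>
      if (i : ℕ) = 0 then cos θ else sin θ / √(((n + 1 : ℕ) : ℝ) - 1)) = StarGraph.vec n θ := by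
    rw [hr]; rfl
  refine ⟨fun θ => ?_, fun s hs0 hs2 => ⟨?_, ?_⟩⟩
  · simp only [hvec, StarGraph.dotProduct_laplacian_mulVec_vec hn,
      StarGraph.dotProduct_distanceDiagonal_mulVec_vec hn, true_and]
    linear_combination sin_sq_add_cos_sq (2 * θ)
  · obtain ⟨θ, hsin, hcos⟩ := exists_sin_two_mul_cos_two_mul hs0 hs2
    refine ⟨StarGraph.vec n θ, StarGraph.sum_sq_vec hn θ, ?_, ?_⟩
    · rw [StarGraph.dotProduct_laplacian_mulVec_vec hn, hsin]; ring
    · rw [StarGraph.dotProduct_distanceDiagonal_mulVec_vec hn, hcos]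
  · rintro g ⟨x, hx, rfl, rfl⟩
    exact le_of_sub_one_sq_add_sq_le_one (StarGraph.spreads_sub_one_sq_add_sq_le_one x hx)
end

section
/- For the diffusion x(t) = e^{-tL}δ_{u0} on the complete graph on N vertices, x(t) = (1/N)[1 + (N-1)e^{-λ₂t}, 1 - e^{-λ₂t}, …, 1 - e^{-λ₂t}]^T with λ₂ = N/(N-1), and the resulting spreads Δ_s²(x(t)) = N e^{-2λ₂t}/(1 + (N-1)e^{-2λ₂t}) and Δ_{g,u0}²(x(t)) = ((N-1)/N)(1 - e^{-λ₂t})²/(1 + (N-1)e^{-2λ₂t}) satisfy the complete-graph uncertainty ellipse (2g - 1)² + (N-1)(s + (N-2)g/(N-1) - 1)² = 1 for all t ≥ 0. -/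
open Matrix BigOperators Finset Real

/-!
Vectors taking one value at `u₀` and another everywhere else (`spike u₀ a b`) form a plane
invariant under the complete-graph Laplacian `L`, spanned by the constant vector (eigenvalue `0`)
and `δ_{u₀} - 𝟙/N` (eigenvalue `λ₂ = N/(N-1)`). Hence
`e^{-tL} δ_{u₀} = 𝟙/N + e^{-λ₂t} (δ_{u₀} - 𝟙/N)`, both spreads are rational functions of
`e = e^{-λ₂t}`, and the ellipse is a polynomial identity between them.
-/

theorem Matrix.exp_mulVec_of_mulVec_eq_smul {𝕂 n : Type*} [RCLike 𝕂] [Fintype n] [DecidableEq n]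
    {A : Matrix n n 𝕂} {w : n → 𝕂} {μ : 𝕂} (h : A *ᵥ w = μ • w) :
    NormedSpace.exp A *ᵥ w = NormedSpace.exp μ • w := by
  have hpow (k : ℕ) : A ^ k *ᵥ w = μ ^ k • w := by
    induction k with
    | zero => simp
    | succ k ih => rw [pow_succ, ← mulVec_mulVec, h, mulVec_smul, ih, smul_smul, ← pow_succ']
  open scoped Norms.Operator in
  have hA := (NormedSpace.exp_series_hasSum_exp' (𝕂 := 𝕂) A).map (mulVec.addMonoidHomLeft w)
    (continuous_id.matrix_mulVec continuous_const)
  have hμ := (NormedSpace.exp_series_hasSum_exp' (𝕂 := 𝕂) μ).smul_const w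
  refine hA.unique ?_
  convert hμ using 2 with k
  simp [mulVec.addMonoidHomLeft, smul_mulVec, hpow, smul_smul]

/-- `rayleigh L x` and `rayleigh (P_{u₀}²) x` are the spreads `Δ_s²(x)` and `Δ_{g,u₀}²(x)`. -/
noncomputable def rayleigh {V : Type*} [Fintype V] (A : Matrix V V ℝ) (x : V → ℝ) : ℝ :=
  x ⬝ᵥ (A *ᵥ x) / ∑ i, x i ^ 2

section Spike

variable {V : Type*} [DecidableEq V]

def spike (u : V) (a b : ℝ) : V → ℝ := fun i => if i = u then a else b

lemma spike_add_spike (u : V) (a b c d : ℝ) :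
    spike u a b + spike u c d = spike u (a + c) (b + d) := by
  ext i; by_cases h : i = u <;> simp [spike, h]

lemma smul_spike (u : V) (a b c : ℝ) : c • spike u a b = spike u (c * a) (c * b) := by
  ext i; by_cases h : i = u <;> simp [spike, h]

lemma spike_mul_spike (u : V) (a b c d : ℝ) :
    spike u a b * spike u c d = spike u (a * c) (b * d) := by
  ext i; by_cases h : i = u <;> simp [spike, h]

variable [Fintype V]

lemma sum_spike (u : V) (a b : ℝ) :
    ∑ i, spike u a b i = a + ((Fintype.card V : ℝ) - 1) * b := by
  simp [spike, Finset.sum_ite, Finset.filter_eq', Finset.filter_ne',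
    Nat.cast_sub (Fintype.card_pos_iff.mpr ⟨u⟩)]

lemma spike_dotProduct_spike (u : V) (a b c d : ℝ) :
    spike u a b ⬝ᵥ spike u c d = a * c + ((Fintype.card V : ℝ) - 1) * (b * d) := by
  rw [dotProduct, ← sum_spike, ← spike_mul_spike]
  rfl

lemma sum_spike_sq (u : V) (a b : ℝ) :
    ∑ i, spike u a b i ^ 2 = a ^ 2 + ((Fintype.card V : ℝ) - 1) * b ^ 2 := by
  simpa [sq, dotProduct] using spike_dotProduct_spike u a b a b

lemma rayleigh_diagonal_spike (u : V) (a b : ℝ) :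
    rayleigh (diagonal (spike u 0 1)) (spike u a b) =
      ((Fintype.card V : ℝ) - 1) * b ^ 2 / (a ^ 2 + ((Fintype.card V : ℝ) - 1) * b ^ 2) := by
  have hmul : diagonal (spike u 0 1) *ᵥ spike u a b = spike u 0 b := by
    ext i; rw [mulVec_diagonal, ← Pi.mul_apply, spike_mul_spike, zero_mul, one_mul]
  rw [rayleigh, hmul, spike_dotProduct_spike, sum_spike_sq, mul_zero, zero_add, ← sq b]

end Spike

section CompleteGraph

variable {N : ℕ}

lemma natCast_sub_one_ne_zero (hN : 2 ≤ N) : (N : ℝ) - 1 ≠ 0 := by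
  rw [sub_ne_zero]; exact_mod_cast (by omega : N ≠ 1)

noncomputable def completeLaplacian (N : ℕ) : Matrix (Fin N) (Fin N) ℝ :=
  of fun i j => if i = j then 1 else -(1 / ((N : ℝ) - 1))

lemma completeLaplacian_mulVec (hN : 2 ≤ N) (y : Fin N → ℝ) :
    completeLaplacian N *ᵥ y = fun i => ((N : ℝ) * y i - ∑ j, y j) / ((N : ℝ) - 1) := by
  ext i
  have hN1 := natCast_sub_one_ne_zero hN
  have hentry (j : Fin N) : completeLaplacian N i j =
      (N : ℝ) / ((N : ℝ) - 1) * (if i = j then 1 else 0) - 1 / ((N : ℝ) - 1) := by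
    by_cases h : i = j
    · simp [completeLaplacian, h]; field_simp
    · simp [completeLaplacian, h]
  simp only [mulVec, dotProduct, hentry, sub_mul, mul_assoc, ite_mul, one_mul, zero_mul,
    Finset.sum_sub_distrib, ← Finset.mul_sum, Finset.sum_ite_eq, Finset.mem_univ, if_true]
  field_simp

lemma completeLaplacian_mulVec_spike (hN : 2 ≤ N) (u : Fin N) (a b : ℝ) :
    completeLaplacian N *ᵥ spike u a b = spike u (a - b) ((b - a) / ((N : ℝ) - 1)) := by
  have hN1 := natCast_sub_one_ne_zero hN
  rw [completeLaplacian_mulVec hN, sum_spike, Fintype.card_fin]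
  ext i
  by_cases h : i = u <;> simp [spike, h] <;> field_simp <;> ring

noncomputable def heatProfile (u : Fin N) (e : ℝ) : Fin N → ℝ :=
  spike u ((1 + ((N : ℝ) - 1) * e) / N) ((1 - e) / N)

lemma exp_smul_completeLaplacian_mulVec_single (hN : 2 ≤ N) (u : Fin N) (t : ℝ) :
    NormedSpace.exp ((-t) • completeLaplacian N) *ᵥ Pi.single u 1 =
      heatProfile u (Real.exp (-((N : ℝ) / ((N : ℝ) - 1)) * t)) := by
  have hN1 := natCast_sub_one_ne_zero hN
  have hN0 : (N : ℝ) ≠ 0 := by positivity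
  have hsplit : Pi.single u 1 = spike u (1 / N) (1 / N) + spike u ((N - 1) / N) (-1 / N) := by
    ext i; by_cases h : i = u <;> simp [spike, h] <;> field_simp <;> ring
  have hconst : ((-t) • completeLaplacian N) *ᵥ spike u (1 / N) (1 / N) =
      (0 : ℝ) • spike u (1 / N) (1 / N) := by
    rw [smul_mulVec, completeLaplacian_mulVec_spike hN, sub_self, zero_smul, smul_spike]
    ext i; simp [spike]
  have hfluct : ((-t) • completeLaplacian N) *ᵥ spike u ((N - 1) / N) (-1 / N) =
      (-(N / (N - 1)) * t) • spike u ((N - 1) / N) (-1 / N) := by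
    rw [smul_mulVec, completeLaplacian_mulVec_spike hN, smul_spike, smul_spike]
    congr 1 <;> field_simp <;> ring
  rw [hsplit, mulVec_add, exp_mulVec_of_mulVec_eq_smul hconst,
    exp_mulVec_of_mulVec_eq_smul hfluct, ← Real.exp_eq_exp_ℝ, Real.exp_zero, one_smul,
    smul_spike, spike_add_spike, heatProfile]
  congr 1 <;> ring

lemma sum_heatProfile_sq (hN : 2 ≤ N) (u : Fin N) (e : ℝ) :
    ∑ i, heatProfile u e i ^ 2 = (1 + ((N : ℝ) - 1) * e ^ 2) / N := by
  have hN0 : (N : ℝ) ≠ 0 := by positivity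
  rw [heatProfile, sum_spike_sq, Fintype.card_fin]
  field_simp
  ring

lemma rayleigh_completeLaplacian_heatProfile (hN : 2 ≤ N) (u : Fin N) (e : ℝ) :
    rayleigh (completeLaplacian N) (heatProfile u e) = N * e ^ 2 / (1 + ((N : ℝ) - 1) * e ^ 2) := by
  have hN1 := natCast_sub_one_ne_zero hN
  have hN0 : (N : ℝ) ≠ 0 := by positivity
  rw [rayleigh, sum_heatProfile_sq hN, heatProfile, completeLaplacian_mulVec_spike hN,
    spike_dotProduct_spike, Fintype.card_fin]
  field_simp
  ring

lemma rayleigh_diagonal_heatProfile (hN : 2 ≤ N) (u : Fin N) (e : ℝ) :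
    rayleigh (diagonal (spike u 0 1)) (heatProfile u e) =
      ((N : ℝ) - 1) / N * (1 - e) ^ 2 / (1 + ((N : ℝ) - 1) * e ^ 2) := by
  have hN0 : (N : ℝ) ≠ 0 := by positivity
  have hnorm := sum_heatProfile_sq hN u e
  rw [heatProfile, sum_spike_sq, Fintype.card_fin] at hnorm
  rw [heatProfile, rayleigh_diagonal_spike, Fintype.card_fin, hnorm]
  field_simp

end CompleteGraph

lemma complete_graph_uncertainty_ellipse {N e s g : ℝ} (hN : 1 < N)
    (hs : s = N * e ^ 2 / (1 + (N - 1) * e ^ 2))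
    (hg : g = (N - 1) / N * (1 - e) ^ 2 / (1 + (N - 1) * e ^ 2)) :
    (2 * g - 1) ^ 2 + (N - 1) * (s + (N - 2) * g / (N - 1) - 1) ^ 2 = 1 := by
  have hN1 : N - 1 ≠ 0 := by linarith
  have hN0 : N ≠ 0 := by linarith
  have hD : 1 + (N - 1) * e ^ 2 ≠ 0 := by nlinarith [sq_nonneg e]
  subst hs hg
  field_simp
  ring

/-- For the diffusion `x(t) = e^{-tL} δ_{u0}` on the complete graph on `N` vertices
(`u0` = vertex 0), `x(t) = (1/N)[1+(N-1)e^{-λ₂t}, 1-e^{-λ₂t}, …]` with `λ₂ = N/(N-1)`,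
the spreads are `Δs = N e^{-2λ₂t}/(1+(N-1)e^{-2λ₂t})` and
`Δg = ((N-1)/N)(1-e^{-λ₂t})²/(1+(N-1)e^{-2λ₂t})`, and they satisfy the complete-graph
uncertainty ellipse `(2g-1)² + (N-1)(s + (N-2)g/(N-1) - 1)² = 1` for all `t ≥ 0`. -/
theorem stmt16 {N : ℕ} (hN : 2 ≤ N)
    (L : Matrix (Fin N) (Fin N) ℝ)
    (hL : L = fun (i j : Fin N) => if i = j then (1 : ℝ) else -(1 / ((N : ℝ) - 1)))
    (P2 : Matrix (Fin N) (Fin N) ℝ)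
    (hP2 : P2 = Matrix.diagonal (fun i : Fin N => if (i : ℕ) = 0 then (0 : ℝ) else 1))
    (u0 : Fin N) (hu0 : (u0 : ℕ) = 0)
    (δ : Fin N → ℝ) (hδ : δ = Pi.single u0 1)
    (x : ℝ → Fin N → ℝ)
    (hx : ∀ t : ℝ, x t = (NormedSpace.exp ((-t) • L)) *ᵥ δ)
    (lam2 : ℝ) (hlam2 : lam2 = (N : ℝ) / ((N : ℝ) - 1)) :
    ∀ t : ℝ, 0 ≤ t →
      (x t = fun i : Fin N => if (i : ℕ) = 0
          then (1 + ((N : ℝ) - 1) * Real.exp (-lam2 * t)) / (N : ℝ)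
          else (1 - Real.exp (-lam2 * t)) / (N : ℝ)) ∧
      (x t ⬝ᵥ (L *ᵥ x t)) / (∑ i, (x t i) ^ 2) =
        (N : ℝ) * Real.exp (-2 * lam2 * t) /
          (1 + ((N : ℝ) - 1) * Real.exp (-2 * lam2 * t)) ∧
      (x t ⬝ᵥ (P2 *ᵥ x t)) / (∑ i, (x t i) ^ 2) =
        (((N : ℝ) - 1) / (N : ℝ)) * (1 - Real.exp (-lam2 * t)) ^ 2 /
          (1 + ((N : ℝ) - 1) * Real.exp (-2 * lam2 * t)) ∧
      (let s : ℝ := (x t ⬝ᵥ (L *ᵥ x t)) / (∑ i, (x t i) ^ 2)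
       let g : ℝ := (x t ⬝ᵥ (P2 *ᵥ x t)) / (∑ i, (x t i) ^ 2)
       (2 * g - 1) ^ 2 +
         ((N : ℝ) - 1) * (s + ((N : ℝ) - 2) * g / ((N : ℝ) - 1) - 1) ^ 2 = 1) := by
  intro t _
  have hu (i : Fin N) : (i : ℕ) = 0 ↔ i = u0 := by rw [Fin.ext_iff, hu0]
  have hLN : L = completeLaplacian N := hL
  have hP : P2 = diagonal (spike u0 0 1) := by simp_rw [hP2, hu]; rfl
  have he2 : Real.exp (-2 * lam2 * t) = Real.exp (-lam2 * t) ^ 2 := by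
    rw [← Real.exp_nat_mul]; ring_nf
  have hxt : x t = heatProfile u0 (Real.exp (-lam2 * t)) := by
    rw [hx, hδ, hLN, exp_smul_completeLaplacian_mulVec_single hN, ← hlam2]
  have hs : rayleigh L (x t) = _ := hxt ▸ hLN ▸ rayleigh_completeLaplacian_heatProfile hN u0 _
  have hg : rayleigh P2 (x t) = _ := hxt ▸ hP ▸ rayleigh_diagonal_heatProfile hN u0 _
  rw [he2]
  refine ⟨?_, hs, hg, ?_⟩
  · rw [hxt]; ext i; simp only [heatProfile, spike, hu]
  exact complete_graph_uncertainty_ellipse (by exact_mod_cast hN) hs hg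
end

section
/- Let x(t) = e^{-tL}δ_{u0} and g_d(t) = x(t)^T P² x(t)/‖x(t)‖². Then ġ_d(0) = 0 and g̈_d(0) = 2 δ_{u0}^T L P² L δ_{u0} = 2 Σ_{v∼u0} d(v,u0)²/(deg(u0) deg(v)), using that P² δ_{u0} = 0 and (L δ_{u0})_v = -1/√(deg(u0)deg(v)) for v ∼ u0. -/
/-!
With `A = -L`, the heat flow is `x(t) = exp(tA) δ`, and along it the derivative of a quadratic
form `xᵀMx` is the quadratic form of `AᵀM + MA`. Since `P²δ = 0`, the numerator `xᵀP²x` and its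
first derivative vanish at `t = 0`, while the denominator `‖x‖²` equals `1` there; the quotient
rule then gives `ġ_d(0) = 0` and `g̈_d(0) = (xᵀP²x)''(0) = 2 (Lδ)ᵀP²(Lδ)`. Finally `Lδ` is the
column of `L` at `u0`, whose entry at a neighbour `v` is `-1/√(deg u0 deg v)` and which vanishes
off `u0` and its neighbours.
-/

open Matrix BigOperators Finset Real

section Calculus

variable {𝕜 : Type*} [NontriviallyNormedField 𝕜] {m n : Type*} [Fintype n]
  {X Y : 𝕜 → n → 𝕜} {X' Y' : n → 𝕜} {t : 𝕜}

theorem HasDerivAt.dotProduct (hX : HasDerivAt X X' t) (hY : HasDerivAt Y Y' t) :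
    HasDerivAt (fun s => X s ⬝ᵥ Y s) (X' ⬝ᵥ Y t + X t ⬝ᵥ Y') t := by
  have := HasDerivAt.fun_sum (u := univ) fun i _ =>
    (hasDerivAt_pi.1 hX i).fun_mul (hasDerivAt_pi.1 hY i)
  rwa [Finset.sum_add_distrib] at this

theorem HasDerivAt.mulVec (M : Matrix m n 𝕜) (hX : HasDerivAt X X' t) :
    HasDerivAt (fun s => M *ᵥ X s) (M *ᵥ X') t :=
  hasDerivAt_pi.2 fun _ => HasDerivAt.fun_sum fun j _ => (hasDerivAt_pi.1 hX j).const_mul _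

end Calculus

section Lyapunov

variable {R : Type*} [CommRing R] {n : Type*} [Fintype n]

def lyapunovMap (A M : Matrix n n R) : Matrix n n R := Aᵀ * M + M * A

variable {A P : Matrix n n R} {c : n → R}

theorem dotProduct_mulVec_eq_zero_of_mulVec_eq_zero (hP : Pᵀ = P) (hc : P *ᵥ c = 0)
    (w : n → R) : c ⬝ᵥ (P *ᵥ w) = 0 := by
  rw [dotProduct_mulVec, ← mulVec_transpose, hP, hc, zero_dotProduct]

theorem dotProduct_lyapunovMap_mulVec_eq_zero (hP : Pᵀ = P) (hc : P *ᵥ c = 0) :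
    c ⬝ᵥ (lyapunovMap A P *ᵥ c) = 0 := by
  rw [lyapunovMap, add_mulVec, ← mulVec_mulVec, ← mulVec_mulVec, hc, mulVec_zero, zero_add,
    dotProduct_mulVec_eq_zero_of_mulVec_eq_zero hP hc]

theorem dotProduct_lyapunovMap_lyapunovMap_mulVec (hP : Pᵀ = P) (hc : P *ᵥ c = 0) :
    c ⬝ᵥ (lyapunovMap A (lyapunovMap A P) *ᵥ c) = 2 * ((A *ᵥ c) ⬝ᵥ (P *ᵥ (A *ᵥ c))) := by
  simp only [lyapunovMap, add_mulVec, ← mulVec_mulVec, hc, mulVec_zero, dotProduct_add,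
    dotProduct_zero, dotProduct_mulVec_eq_zero_of_mulVec_eq_zero hP hc, dotProduct_mulVec c Aᵀ,
    vecMul_transpose]
  ring

end Lyapunov

section MatrixExp

variable {𝕜 : Type*} [RCLike 𝕜] {n : Type*} [Fintype n] [DecidableEq n]

theorem hasDerivAt_exp_smul_mulVec (A : Matrix n n 𝕜) (c : n → 𝕜) (t : 𝕜) :
    HasDerivAt (fun s => NormedSpace.exp (s • A) *ᵥ c)
      (A *ᵥ (NormedSpace.exp (t • A) *ᵥ c)) t := by
  open scoped Norms.Operator in
  let applyTo : Matrix n n 𝕜 →ₗ[𝕜] n → 𝕜 :=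
    { toFun := fun M => M *ᵥ c
      map_add' := fun M N => add_mulVec M N c
      map_smul' := fun r M => smul_mulVec r M c }
  rw [mulVec_mulVec]
  exact (LinearMap.toContinuousLinearMap applyTo).hasFDerivAt.comp_hasDerivAt t
    (hasDerivAt_exp_smul_const' A t)

theorem exp_mulVec_ne_zero (A : Matrix n n 𝕜) {c : n → 𝕜} (hc : c ≠ 0) :
    NormedSpace.exp A *ᵥ c ≠ 0 := by
  rw [← mulVec_zero (NormedSpace.exp A)]
  exact (mulVec_injective_iff_isUnit.2 (Matrix.isUnit_exp A)).ne hc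

noncomputable def expQuadForm (A M : Matrix n n 𝕜) (c : n → 𝕜) (t : 𝕜) : 𝕜 :=
  (NormedSpace.exp (t • A) *ᵥ c) ⬝ᵥ (M *ᵥ (NormedSpace.exp (t • A) *ᵥ c))

theorem expQuadForm_zero (A M : Matrix n n 𝕜) (c : n → 𝕜) :
    expQuadForm A M c 0 = c ⬝ᵥ (M *ᵥ c) := by
  rw [expQuadForm, zero_smul, NormedSpace.exp_zero, one_mulVec]

theorem hasDerivAt_expQuadForm (A M : Matrix n n 𝕜) (c : n → 𝕜) (t : 𝕜) :
    HasDerivAt (expQuadForm A M c) (expQuadForm A (lyapunovMap A M) c t) t := by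
  have hX := hasDerivAt_exp_smul_mulVec A c t
  refine (hX.dotProduct (hX.mulVec M)).congr_deriv ?_
  set X := NormedSpace.exp (t • A) *ᵥ c
  rw [expQuadForm, lyapunovMap, add_mulVec, dotProduct_add, ← mulVec_mulVec, ← mulVec_mulVec,
    dotProduct_mulVec X Aᵀ, vecMul_transpose]

theorem expQuadForm_one_ne_zero (A : Matrix n n ℝ) {c : n → ℝ} (hc : c ≠ 0) (t : ℝ) :
    expQuadForm A 1 c t ≠ 0 := by
  rw [expQuadForm, one_mulVec, Ne, dotProduct_self_eq_zero]
  exact exp_mulVec_ne_zero (t • A) hc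

end MatrixExp

theorem deriv_div_eq_zero_and_deriv_deriv_div_eq {𝕜 : Type*} [NontriviallyNormedField 𝕜]
    {f f' h h' : 𝕜 → 𝕜} {f''₀ : 𝕜}
    (hf : ∀ t, HasDerivAt f (f' t) t) (hf' : HasDerivAt f' f''₀ 0)
    (hh : ∀ t, HasDerivAt h (h' t) t) (hh' : DifferentiableAt 𝕜 h' 0) (hne : ∀ t, h t ≠ 0)
    (hf0 : f 0 = 0) (hf'0 : f' 0 = 0) (hh0 : h 0 = 1) :
    deriv (fun t => f t / h t) 0 = 0 ∧ deriv (deriv fun t => f t / h t) 0 = f''₀ := by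
  have hderiv : deriv (fun t => f t / h t) = fun t => (f' t * h t - f t * h' t) / h t ^ 2 :=
    funext fun t => ((hf t).div (hh t) (hne t)).deriv
  have hderiv_hasDerivAt := ((hf'.fun_mul (hh 0)).fun_sub ((hf 0).fun_mul hh'.hasDerivAt)).fun_div
    ((hh 0).fun_pow 2) (pow_ne_zero 2 (hne 0))
  refine ⟨by simp [hderiv, hf0, hf'0], ?_⟩
  rw [hderiv, hderiv_hasDerivAt.deriv]
  simp [hf0, hf'0, hh0]

section NormLap

variable {V : Type*} [Fintype V] [DecidableEq V] (G : SimpleGraph V) [DecidableRel G.Adj]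

theorem normLap_transpose : (normLap G)ᵀ = normLap G := by
  ext i j
  simp only [transpose_apply, normLap, eq_comm (a := j), G.adj_comm j i, mul_comm]

variable {G} {u v : V}

theorem normLap_apply_of_adj (h : G.Adj u v) :
    normLap G u v = -(1 / (√(G.degree u) * √(G.degree v))) := by
  simp [normLap, h, h.ne]

theorem normLap_apply_of_ne_of_not_adj (hne : u ≠ v) (h : ¬G.Adj u v) : normLap G u v = 0 := by
  simp [normLap, h, hne]

theorem normLap_mulVec_single_apply_of_adj (h : G.Adj u v) :
    (normLap G *ᵥ Pi.single u 1) v = -(1 / (√(G.degree u) * √(G.degree v))) := by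
  rw [mulVec_single_one, col_apply, normLap_apply_of_adj h.symm, mul_comm]

theorem normLap_mulVec_single_dotProduct_diagonal {w : V → ℝ} (hw : w u = 0) :
    (normLap G *ᵥ Pi.single u 1) ⬝ᵥ (diagonal w *ᵥ (normLap G *ᵥ Pi.single u 1)) =
      ∑ v ∈ G.neighborFinset u, w v / (G.degree u * G.degree v) := by
  rw [mulVec_single_one, dotProduct, ← Finset.sum_subset (subset_univ (G.neighborFinset u))]
  · refine sum_congr rfl fun v hv => ?_
    rw [SimpleGraph.mem_neighborFinset] at hv
    have hsq : (√(G.degree v) * √(G.degree u)) ^ 2 = G.degree u * G.degree v := by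
      rw [mul_pow, sq_sqrt (Nat.cast_nonneg _), sq_sqrt (Nat.cast_nonneg _), mul_comm]
    rw [mulVec_diagonal, col_apply, normLap_apply_of_adj hv.symm, ← hsq]
    ring
  · intro v _ hv
    rw [SimpleGraph.mem_neighborFinset] at hv
    rcases eq_or_ne v u with rfl | hvu
    · simp [mulVec_diagonal, hw]
    · simp [mulVec_diagonal, normLap_apply_of_ne_of_not_adj hvu (fun h => hv h.symm)]

end NormLap

theorem stmt19_general {V : Type*} [Fintype V] [DecidableEq V]
    (G : SimpleGraph V) [DecidableRel G.Adj]
    (d : V → V → ℝ)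
    (hd_eq_zero : ∀ u v, d u v = 0 ↔ u = v)
    (u0 : V)
    (P2 : Matrix V V ℝ) (hP2 : P2 = Matrix.diagonal (fun v => (d u0 v) ^ 2))
    (δ : V → ℝ) (hδ : δ = Pi.single u0 1)
    (x : ℝ → V → ℝ)
    (hx : ∀ t : ℝ, x t = (NormedSpace.exp ((-t) • normLap G)) *ᵥ δ)
    (gd : ℝ → ℝ)
    (hgd : ∀ t : ℝ, gd t = (x t ⬝ᵥ (P2 *ᵥ x t)) / (∑ v : V, (x t v) ^ 2)) :
    (∀ v : V, G.Adj u0 v →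
      (normLap G *ᵥ δ) v =
        -(1 / (Real.sqrt (G.degree u0) * Real.sqrt (G.degree v)))) ∧
    deriv gd 0 = 0 ∧
    deriv (deriv gd) 0 = 2 * (δ ⬝ᵥ (normLap G *ᵥ (P2 *ᵥ (normLap G *ᵥ δ)))) ∧
    deriv (deriv gd) 0 =
      2 * ∑ v ∈ G.neighborFinset u0,
        (d u0 v) ^ 2 / ((G.degree u0 : ℝ) * (G.degree v : ℝ)) := by
  set L := normLap G
  have hgd' : gd = fun t => expQuadForm (-L) P2 δ t / expQuadForm (-L) 1 δ t := by
    funext t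
    rw [hgd, hx, expQuadForm, expQuadForm, smul_neg, neg_smul, one_mulVec]
    exact congrArg _ (sum_congr rfl fun v _ => sq _)
  have hP2δ : P2 *ᵥ δ = 0 := by
    rw [hP2, hδ, diagonal_mulVec_single, (hd_eq_zero u0 u0).2 rfl]
    simp
  have hP2T : P2ᵀ = P2 := by rw [hP2, diagonal_transpose]
  obtain ⟨hfirst, hsecond⟩ := deriv_div_eq_zero_and_deriv_deriv_div_eq
    (hasDerivAt_expQuadForm (-L) P2 δ) (hasDerivAt_expQuadForm _ _ δ 0)
    (hasDerivAt_expQuadForm (-L) 1 δ) (hasDerivAt_expQuadForm _ _ δ 0).differentiableAt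
    (expQuadForm_one_ne_zero (-L) (by simp [hδ]))
    (by rw [expQuadForm_zero, hP2δ, dotProduct_zero])
    (by rw [expQuadForm_zero, dotProduct_lyapunovMap_mulVec_eq_zero hP2T hP2δ])
    (by simp [expQuadForm_zero, hδ])
  rw [← hgd', expQuadForm_zero, dotProduct_lyapunovMap_lyapunovMap_mulVec hP2T hP2δ,
    neg_mulVec, mulVec_neg, neg_dotProduct, dotProduct_neg, neg_neg] at hsecond
  have hquad : δ ⬝ᵥ (L *ᵥ (P2 *ᵥ (L *ᵥ δ))) = (L *ᵥ δ) ⬝ᵥ (P2 *ᵥ (L *ᵥ δ)) := by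
    rw [dotProduct_mulVec, ← mulVec_transpose, normLap_transpose]
  refine ⟨fun v hv => hδ ▸ normLap_mulVec_single_apply_of_adj hv, hgd' ▸ hfirst, ?_, ?_⟩
  · rw [hsecond, hquad]
  · rw [hsecond, hP2, hδ, normLap_mulVec_single_dotProduct_diagonal (by simp [hd_eq_zero])]

/-- For the graph spread `g_d(t) = x(t)ᵀP²x(t)/‖x(t)‖²` of the heat diffusion
`x(t) = e^{-tL}δ_{u0}`: one has `(Lδ_{u0})_v = -1/√(deg u0 · deg v)` for `v ∼ u0`,
`ġ_d(0) = 0`, and `g̈_d(0) = 2 δᵀ L P² L δ = 2 Σ_{v∼u0} d(v,u0)²/(deg u0 · deg v)`. -/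
theorem stmt19 {V : Type*} [Fintype V] [DecidableEq V]
    (G : SimpleGraph V) [DecidableRel G.Adj] (hconn : G.Connected)
    (d : V → V → ℝ)
    (hd_nonneg : ∀ u v, 0 ≤ d u v)
    (hd_eq_zero : ∀ u v, d u v = 0 ↔ u = v)
    (hd_symm : ∀ u v, d u v = d v u)
    (u0 : V)
    (P2 : Matrix V V ℝ) (hP2 : P2 = Matrix.diagonal (fun v => (d u0 v) ^ 2))
    (δ : V → ℝ) (hδ : δ = Pi.single u0 1)
    (x : ℝ → V → ℝ)
    (hx : ∀ t : ℝ, x t = (NormedSpace.exp ((-t) • normLap G)) *ᵥ δ)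
    (gd : ℝ → ℝ)
    (hgd : ∀ t : ℝ, gd t = (x t ⬝ᵥ (P2 *ᵥ x t)) / (∑ v : V, (x t v) ^ 2)) :
    (∀ v : V, G.Adj u0 v →
      (normLap G *ᵥ δ) v =
        -(1 / (Real.sqrt (G.degree u0) * Real.sqrt (G.degree v)))) ∧
    deriv gd 0 = 0 ∧
    deriv (deriv gd) 0 = 2 * (δ ⬝ᵥ (normLap G *ᵥ (P2 *ᵥ (normLap G *ᵥ δ)))) ∧
    deriv (deriv gd) 0 =
      2 * ∑ v ∈ G.neighborFinset u0,
        (d u0 v) ^ 2 / ((G.degree u0 : ℝ) * (G.degree v : ℝ)) :=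
  stmt19_general G d hd_eq_zero u0 P2 hP2 δ hδ x hx gd hgd
end
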